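/- arXiv:1204.1666 — 2 statements merged into one kernel-verified Lean document; each statement's English description precedes it below -/
import Mathlib

section
/- Let Q be a cube in ℝⁿ and let f ∈ L^∞(ℝⁿ) be bounded with compact support and supp(f) ⊆ Q. Then there exist constants c, α > 0, depending only on the dimension n, such that for all t > 0, |{x ∈ Q : |f(x) − m_f(Q)| > t·M^#_{2^{−n−2};Q}(f)(x)}| ≤ c·e^{−αt}·|Q|, where m_f(Q) is any median value of f over Q. -/
open MeasureTheory ENNReal Set Function

noncomputable section

/-- Euclidean space `ℝⁿ`. -/
abbrev En (n : ℕ) := EuclideanSpace ℝ (Fin n)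

/-- An axis-parallel cube in `ℝⁿ` with positive side length. -/
def IsCube {n : ℕ} (Q : Set (En n)) : Prop :=
  ∃ (a : En n) (h : ℝ), 0 < h ∧ Q = {x : En n | ∀ i, a i ≤ x i ∧ x i ≤ a i + h}

/-- Hardy–Littlewood maximal operator (over cubes) of an `ℝ≥0∞`-valued function. -/
def maxE {n : ℕ} (g : En n → ℝ≥0∞) : En n → ℝ≥0∞ := fun x =>
  ⨆ (Q : Set (En n)) (_ : IsCube Q ∧ x ∈ Q), (∫⁻ y in Q, g y) / volume Q

/-- Hardy–Littlewood maximal operator `M` of a real function. -/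
def maxF {n : ℕ} (f : En n → ℝ) : En n → ℝ≥0∞ :=
  maxE fun y => (‖f y‖₊ : ℝ≥0∞)

/-- The least constant `C` with `Mw ≤ C·w` a.e., i.e. the `A₁` constant `[w]_{A₁}`. -/
def A1Const (n : ℕ) (w : En n → ℝ≥0∞) : ℝ≥0∞ :=
  sInf {C : ℝ≥0∞ | ∀ᵐ x ∂(volume : Measure (En n)), maxE w x ≤ C * w x}

/-- The `A_q` constant of a weight for `1 ≤ q < ∞`; for `q = 1` it is the `A₁` constant. -/
def AqConst (n : ℕ) (q : ℝ) (w : En n → ℝ≥0∞) : ℝ≥0∞ :=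
  if q = 1 then A1Const n w
  else ⨆ (Q : Set (En n)) (_ : IsCube Q),
    ((∫⁻ x in Q, w x) / volume Q) *
      ((∫⁻ x in Q, w x ^ (1 / (1 - q))) / volume Q) ^ (q - 1)

/-- `w ∈ A_q`: a measurable, locally integrable weight with finite `A_q` constant. -/
def IsAq (n : ℕ) (q : ℝ) (w : En n → ℝ≥0∞) : Prop :=
  Measurable w ∧ (∀ Q : Set (En n), IsCube Q → ∫⁻ x in Q, w x < ⊤) ∧ AqConst n q w < ⊤

/-- A Calderón–Zygmund operator on `ℝⁿ`: a linear operator bounded on `L²`, with a kernel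
satisfying the standard size and regularity estimates and representing the operator away
from the support. -/
structure CZO (n : ℕ) where
  toFun : (En n → ℝ) → En n → ℝ
  K : En n → En n → ℝ
  C : ℝ
  ε : ℝ
  C_pos : 0 < C
  ε_pos : 0 < ε
  map_add : ∀ f g : En n → ℝ, toFun (f + g) = toFun f + toFun g
  map_smul : ∀ (c : ℝ) (f : En n → ℝ), toFun (c • f) = c • toFun f
  l2_bound : ∀ f : En n → ℝ, MemLp f 2 volume →
    eLpNorm (toFun f) 2 volume ≤ ENNReal.ofReal C * eLpNorm f 2 volume
  size : ∀ x y : En n, x ≠ y → |K x y| ≤ C / dist x y ^ n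
  regularity : ∀ x y z : En n, 2 * dist x z < dist x y →
    |K x y - K z y| + |K y x - K y z| ≤
      C * dist x z ^ ε / dist x y ^ ((n : ℝ) + ε)
  repr : ∀ f : En n → ℝ, ContDiff ℝ (⊤ : ℕ∞) f → HasCompactSupport f →
    ∀ x ∉ tsupport f, toFun f x = ∫ y, K x y * f y

/-- The maximal singular integral operator `T*`. -/
def Tstar {n : ℕ} (T : CZO n) (f : En n → ℝ) (x : En n) : ℝ≥0∞ :=
  ⨆ (ε : ℝ) (_ : 0 < ε), (‖∫ y in {y : En n | ε < dist x y}, T.K x y * f y‖₊ : ℝ≥0∞)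

/-- Average of `f` over a set `Q`. -/
def cubeAvg {n : ℕ} (f : En n → ℝ) (Q : Set (En n)) : ℝ :=
  (volume Q).toReal⁻¹ * ∫ x in Q, f x

/-- The BMO norm of `b`. -/
def bmoNorm {n : ℕ} (b : En n → ℝ) : ℝ≥0∞ :=
  ⨆ (Q : Set (En n)) (_ : IsCube Q),
    (∫⁻ x in Q, (‖b x - cubeAvg b Q‖₊ : ℝ≥0∞)) / volume Q

/-- Iterated commutators: `commIter T b 0 = T`, `commIter T b (k+1) = [b, commIter T b k]`;
in particular `commIter T b 1 f = b·Tf − T(bf)`. -/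
def commIter {n : ℕ} (T : CZO n) (b : En n → ℝ) : ℕ → (En n → ℝ) → En n → ℝ
  | 0, f => T.toFun f
  | k + 1, f => fun x =>
      b x * commIter T b k f x - commIter T b k (fun y => b y * f y) x

/-- `m` is a median value of `f` on `Q`. -/
def IsMedianOn {n : ℕ} (f : En n → ℝ) (Q : Set (En n)) (m : ℝ) : Prop :=
  volume {x ∈ Q | m < f x} ≤ volume Q / 2 ∧ volume {x ∈ Q | f x < m} ≤ volume Q / 2

/-- Non-increasing rearrangement of `g·χ_A` evaluated at `t`. -/
def rearr {n : ℕ} (g : En n → ℝ) (A : Set (En n)) (t : ℝ≥0∞) : ℝ :=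
  sInf {s : ℝ | 0 ≤ s ∧ volume {x ∈ A | s < |g x|} ≤ t}

/-- Mean local oscillation `ω_λ(f;Q)`. -/
def oscW {n : ℕ} (lam : ℝ) (f : En n → ℝ) (Q : Set (En n)) : ℝ :=
  ⨅ c : ℝ, rearr (fun x => f x - c) Q (ENNReal.ofReal lam * volume Q)

/-- Strömberg's local sharp maximal function `M^#_{λ;Q₀}f`. -/
def localSharp {n : ℕ} (lam : ℝ) (Q₀ : Set (En n)) (f : En n → ℝ) (x : En n) : ℝ :=
  ⨆ Q : {Q : Set (En n) // IsCube Q ∧ x ∈ Q ∧ Q ⊆ Q₀}, oscW lam f Q.1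

/-- An `m`-linear Calderón–Zygmund operator on `ℝⁿ`. -/
structure MultiCZO (n m : ℕ) where
  toFun : (Fin m → En n → ℝ) → En n → ℝ
  K : En n → (Fin m → En n) → ℝ
  C : ℝ
  ε : ℝ
  C_pos : 0 < C
  ε_pos : 0 < ε
  exponents : Fin m → ℝ
  exponents_ge : ∀ i, 1 ≤ exponents i
  multilinear_add : ∀ (f : Fin m → En n → ℝ) (i : Fin m) (g h : En n → ℝ),
    toFun (Function.update f i (g + h)) =
      fun x => toFun (Function.update f i g) x + toFun (Function.update f i h) x
  multilinear_smul : ∀ (f : Fin m → En n → ℝ) (i : Fin m) (c : ℝ) (g : En n → ℝ),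
    toFun (Function.update f i (c • g)) = fun x => c * toFun (Function.update f i g) x
  lp_bound : ∀ f : Fin m → En n → ℝ,
    (∀ i, MemLp (f i) (ENNReal.ofReal (exponents i)) volume) →
    eLpNorm (toFun f) (ENNReal.ofReal (∑ i, (exponents i)⁻¹)⁻¹) volume ≤
      ENNReal.ofReal C * ∏ i, eLpNorm (f i) (ENNReal.ofReal (exponents i)) volume
  size : ∀ (x : En n) (y : Fin m → En n), (∃ j, y j ≠ x) →
    |K x y| ≤ C / (∑ j, dist x (y j)) ^ (n * m)
  regularity_x : ∀ (x x' : En n) (y : Fin m → En n), (∃ j, y j ≠ x) →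
    2 * dist x x' ≤ ⨆ j, dist x (y j) →
    |K x y - K x' y| ≤ C * dist x x' ^ ε / (∑ j, dist x (y j)) ^ ((n * m : ℝ) + ε)
  regularity_y : ∀ (x : En n) (y : Fin m → En n) (i : Fin m) (y' : En n), (∃ j, y j ≠ x) →
    2 * dist (y i) y' ≤ ⨆ j, dist x (y j) →
    |K x y - K x (Function.update y i y')| ≤
      C * dist (y i) y' ^ ε / (∑ j, dist x (y j)) ^ ((n * m : ℝ) + ε)
  repr : ∀ f : Fin m → En n → ℝ, (∀ i, ContDiff ℝ (⊤ : ℕ∞) (f i)) →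
    (∀ i, HasCompactSupport (f i)) →
    ∀ x ∉ ⋂ j, tsupport (f j), toFun f x = ∫ y : Fin m → En n, K x y * ∏ j, f j (y j)

/-- The multilinear maximal function `𝓜`. -/
def multiMax {n m : ℕ} (f : Fin m → En n → ℝ) (x : En n) : ℝ≥0∞ :=
  ⨆ (Q : Set (En n)) (_ : IsCube Q ∧ x ∈ Q), ∏ i, (∫⁻ y in Q, (‖f i y‖₊ : ℝ≥0∞)) / volume Q

/-- The multilinear maximal function of a vector of Borel measures. -/
def multiMaxMeas {n m : ℕ} (μ : Fin m → Measure (En n)) (x : En n) : ℝ≥0∞ :=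
  ⨆ (Q : Set (En n)) (_ : IsCube Q ∧ x ∈ Q), ∏ i, μ i Q / volume Q

/-- `|f(x)|_q` for a sequence of functions. -/
def lqNorm {n : ℕ} (q : ℝ) (f : ℕ → En n → ℝ) (x : En n) : ℝ≥0∞ :=
  (∑' j, (‖f j x‖₊ : ℝ≥0∞) ^ q) ^ (1 / q)

/-- The vector-valued extension `T̄_q` of a Calderón–Zygmund operator. -/
def vecT {n : ℕ} (T : CZO n) (q : ℝ) (f : ℕ → En n → ℝ) (x : En n) : ℝ≥0∞ :=
  (∑' j, (‖T.toFun (f j) x‖₊ : ℝ≥0∞) ^ q) ^ (1 / q)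

/-- The Fefferman–Stein vector-valued maximal function `M̄_q`. -/
def vecM {n : ℕ} (q : ℝ) (f : ℕ → En n → ℝ) (x : En n) : ℝ≥0∞ :=
  (∑' j, maxF (f j) x ^ q) ^ (1 / q)

/-- Dyadic cube of generation `k` and position `m`. -/
def dyadicCube (n : ℕ) (k : ℤ) (m : Fin n → ℤ) : Set (En n) :=
  {x : En n | ∀ i, (m i : ℝ) * 2 ^ k ≤ x i ∧ x i < ((m i : ℝ) + 1) * 2 ^ k}

/-- The dyadic square function `S_d f` (each dyadic cube appears as `dyadicCube n k m`,
with dyadic parent `dyadicCube n (k+1) (fun i => ⌊m i / 2⌋)`). -/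
def dyadicSq {n : ℕ} (f : En n → ℝ) (x : En n) : ℝ≥0∞ :=
  (∑' p : ℤ × (Fin n → ℤ),
    (dyadicCube n p.1 p.2).indicator
      (fun _ => ENNReal.ofReal ((cubeAvg f (dyadicCube n p.1 p.2) -
        cubeAvg f (dyadicCube n (p.1 + 1) (fun i => Int.fdiv (p.2 i) 2))) ^ 2)) x) ^ (1/2 : ℝ)

/-- The continuous Littlewood–Paley square function `g*_μ` built from `φ`. -/
def gstar {n : ℕ} (mu : ℝ) (φ : SchwartzMap (En n) ℝ) (f : En n → ℝ) (x : En n) : ℝ≥0∞ :=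
  (∫⁻ t in Set.Ioi (0 : ℝ), ∫⁻ y : En n,
    (‖∫ z : En n, (t ^ n)⁻¹ * φ (t⁻¹ • (y - z)) * f z‖₊ : ℝ≥0∞) ^ 2 *
      ENNReal.ofReal ((t / (t + dist x y)) ^ ((n : ℝ) * mu)) *
      ENNReal.ofReal ((t ^ (n + 1))⁻¹)) ^ (1/2 : ℝ)

/-- `L^r(ℝⁿ)`-norm of an `ℝ≥0∞`-valued function. -/
def lpNormE {n : ℕ} (r : ℝ) (g : En n → ℝ≥0∞) : ℝ≥0∞ :=
  (∫⁻ x, g x ^ r) ^ (1 / r)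

/-- The operator norm of the Hardy–Littlewood maximal operator on `L^r(ℝⁿ)`. -/
def maxOpNorm (n : ℕ) (r : ℝ) : ℝ≥0∞ :=
  sInf {C : ℝ≥0∞ | ∀ f : En n → ℝ, Measurable f →
    lpNormE r (maxF f) ≤ C * lpNormE r fun x => (‖f x‖₊ : ℝ≥0∞)}

/-- The Rubio de Francia operator `R(h) = ∑ₖ 2⁻ᵏ Mᵏh / ‖M‖_{L^r}ᵏ`. -/
def rubio {n : ℕ} (r : ℝ) (h : En n → ℝ) (x : En n) : ℝ≥0∞ :=
  ∑' k : ℕ, ((2 : ℝ≥0∞) ^ k)⁻¹ * (maxOpNorm n r ^ k)⁻¹ *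
    maxE^[k] (fun y => ENNReal.ofReal (h y)) x

/-- The `δ`-sharp maximal function `M^#_{δ;Q₀}` relative to a cube `Q₀`. -/
def sharpDelta {n : ℕ} (δ : ℝ) (Q₀ : Set (En n)) (f : En n → ℝ) (x : En n) : ℝ≥0∞ :=
  ⨆ (Q : Set (En n)) (_ : IsCube Q ∧ x ∈ Q ∧ Q ⊆ Q₀),
    ⨅ c : ℝ, ((∫⁻ y in Q, (‖f y - c‖₊ : ℝ≥0∞) ^ δ) / volume Q) ^ (1 / δ)
namespace JS
open Metric

variable {n : ℕ}

/-- A canonical median. -/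
def medOn (f : En n → ℝ) (A : Set (En n)) : ℝ :=
  sInf {s : ℝ | volume {x ∈ A | s < f x} ≤ volume A / 2}

section Median
variable {f : En n → ℝ} {A : Set (En n)} {B : ℝ}

lemma isMedianOn_medOn (hf : Measurable f) (hB : ∀ x, |f x| ≤ B)
    (hA : MeasurableSet A) (h0 : volume A ≠ 0) (ht : volume A ≠ ⊤) :
    IsMedianOn f A (medOn f A) := by
  set S := {s : ℝ | volume {x ∈ A | s < f x} ≤ volume A / 2} with hS
  have hup : ∀ s ∈ S, ∀ s', s ≤ s' → s' ∈ S := by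
    intro s hs s' h
    refine le_trans (measure_mono ?_) hs
    intro x hx
    exact ⟨hx.1, lt_of_le_of_lt h hx.2⟩
  have hBS : B ∈ S := by
    have : {x ∈ A | B < f x} = ∅ := by
      ext x; simp only [Set.mem_setOf_eq, Set.mem_empty_iff_false, iff_false, not_and, not_lt]
      exact fun _ => le_trans (le_abs_self _) (hB x)
    simp [hS, this]
  have hSne : S.Nonempty := ⟨B, hBS⟩
  have hbdd : BddBelow S := by
    refine ⟨-B, fun s hs => ?_⟩
    by_contra hlt
    push_neg at hlt
    have hsub : A ⊆ {x ∈ A | s < f x} := by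
      intro x hx
      exact ⟨hx, lt_of_lt_of_le hlt (neg_le_of_abs_le (hB x))⟩
    have h2 : volume A ≤ volume A / 2 := le_trans (measure_mono hsub) hs
    exact absurd (lt_of_le_of_lt h2 (ENNReal.half_lt_self h0 ht)) (lt_irrefl _)
  constructor
  · have heq : {x ∈ A | medOn f A < f x} = ⋃ k : ℕ, {x ∈ A | medOn f A + 1/(k+1) < f x} := by
      ext x
      simp only [Set.mem_setOf_eq, Set.mem_iUnion]
      constructor
      · rintro ⟨hxA, hx⟩
        obtain ⟨k, hk⟩ := exists_nat_one_div_lt (sub_pos.mpr hx)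
        exact ⟨k, hxA, by linarith⟩
      · rintro ⟨k, hxA, hx⟩
        refine ⟨hxA, lt_of_le_of_lt (le_add_of_nonneg_right (by positivity)) hx⟩
    have hmono : Monotone fun k : ℕ => {x ∈ A | medOn f A + 1/(k+1) < f x} := by
      intro k k' hk x hx
      refine ⟨hx.1, lt_of_le_of_lt (add_le_add_right ?_ _) hx.2⟩
      apply one_div_le_one_div_of_le (by positivity)
      exact_mod_cast add_le_add_left (Nat.cast_le.mpr hk) 1
    rw [heq, hmono.measure_iUnion]
    refine iSup_le fun k => ?_
    have : medOn f A + 1/(k+1) ∈ S := by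
      obtain ⟨s, hsS, hslt⟩ := Real.lt_sInf_add_pos hSne (show (0:ℝ) < 1/(k+1) by positivity)
      exact hup s hsS _ (by simpa [medOn, hS] using hslt.le)
    exact this
  · have key : ∀ s : ℝ, s < medOn f A → volume {x ∈ A | f x ≤ s} ≤ volume A / 2 := by
      intro s hs
      have hsnot : s ∉ S := fun h => absurd (csInf_le hbdd h) (not_le.mpr hs)
      have hgt : volume A / 2 ≤ volume {x ∈ A | s < f x} := le_of_not_ge (by simpa [hS] using hsnot)
      have hsplit : volume {x ∈ A | f x ≤ s} + volume {x ∈ A | s < f x} = volume A := by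
        have e1 : {x ∈ A | f x ≤ s} = A ∩ f ⁻¹' Set.Iic s := by
          ext x; simp [Set.mem_setOf_eq]
        have e2 : {x ∈ A | s < f x} = A \ f ⁻¹' Set.Iic s := by
          ext x; simp [Set.mem_setOf_eq, not_le]
        rw [e1, e2, measure_inter_add_diff A (hf measurableSet_Iic)]
      have hbne : volume {x ∈ A | s < f x} ≠ ⊤ :=
        ne_top_of_le_ne_top ht (measure_mono (Set.sep_subset _ _))
      have ha : volume {x ∈ A | f x ≤ s} = volume A - volume {x ∈ A | s < f x} :=
        ENNReal.eq_sub_of_add_eq hbne hsplit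
      rw [ha]
      calc volume A - volume {x ∈ A | s < f x} ≤ volume A - volume A / 2 :=
            tsub_le_tsub_left hgt _
        _ = volume A / 2 := ENNReal.sub_half ht
    have heq : {x ∈ A | f x < medOn f A} = ⋃ k : ℕ, {x ∈ A | f x ≤ medOn f A - 1/(k+1)} := by
      ext x
      simp only [Set.mem_setOf_eq, Set.mem_iUnion]
      constructor
      · rintro ⟨hxA, hx⟩
        obtain ⟨k, hk⟩ := exists_nat_one_div_lt (sub_pos.mpr hx)
        exact ⟨k, hxA, by linarith⟩
      · rintro ⟨k, hxA, hx⟩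
        refine ⟨hxA, lt_of_le_of_lt hx (by simp; positivity)⟩
    have hmono : Monotone fun k : ℕ => {x ∈ A | f x ≤ medOn f A - 1/(k+1)} := by
      intro k k' hk x hx
      refine ⟨hx.1, le_trans hx.2 (sub_le_sub_left ?_ _)⟩
      apply one_div_le_one_div_of_le (by positivity)
      exact_mod_cast add_le_add_left (Nat.cast_le.mpr hk) 1
    rw [heq, hmono.measure_iUnion]
    exact iSup_le fun k => key _ (by simp; positivity)

lemma median_halves {f : En n → ℝ} {A : Set (En n)} {m : ℝ} (hf : Measurable f)
    (hA : MeasurableSet A) (ht : volume A ≠ ⊤) (hm : IsMedianOn f A m) :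
    volume A / 2 ≤ volume {x ∈ A | m ≤ f x} ∧ volume A / 2 ≤ volume {x ∈ A | f x ≤ m} := by
  constructor
  · have e1 : A ∩ f ⁻¹' Set.Ici m = {x ∈ A | m ≤ f x} := by ext x; simp [Set.mem_setOf_eq]
    have e2 : A \ f ⁻¹' Set.Ici m = {x ∈ A | f x < m} := by
      ext x; simp [Set.mem_setOf_eq, not_le]
    have hsplit := measure_inter_add_diff (μ := volume) A (hf (measurableSet_Ici (a := m)))
    rw [e1, e2] at hsplit
    have h2 : volume {x ∈ A | f x < m} ≤ volume A / 2 := hm.2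
    have hfin : volume {x ∈ A | f x < m} ≠ ⊤ :=
      ne_top_of_le_ne_top ht (measure_mono (Set.sep_subset _ _))
    have : volume {x ∈ A | m ≤ f x} = volume A - volume {x ∈ A | f x < m} :=
      ENNReal.eq_sub_of_add_eq hfin hsplit
    rw [this]
    calc volume A / 2 = volume A - volume A / 2 := (ENNReal.sub_half ht).symm
      _ ≤ volume A - volume {x ∈ A | f x < m} := tsub_le_tsub_left h2 _
  · have e1 : A ∩ f ⁻¹' Set.Iic m = {x ∈ A | f x ≤ m} := by ext x; simp [Set.mem_setOf_eq]
    have e2 : A \ f ⁻¹' Set.Iic m = {x ∈ A | m < f x} := by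
      ext x; simp [Set.mem_setOf_eq, not_le]
    have hsplit := measure_inter_add_diff (μ := volume) A (hf (measurableSet_Iic (a := m)))
    rw [e1, e2] at hsplit
    have h2 : volume {x ∈ A | m < f x} ≤ volume A / 2 := hm.1
    have hfin : volume {x ∈ A | m < f x} ≠ ⊤ :=
      ne_top_of_le_ne_top ht (measure_mono (Set.sep_subset _ _))
    have : volume {x ∈ A | f x ≤ m} = volume A - volume {x ∈ A | m < f x} :=
      ENNReal.eq_sub_of_add_eq hfin hsplit
    rw [this]
    calc volume A / 2 = volume A - volume A / 2 := (ENNReal.sub_half ht).symm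
      _ ≤ volume A - volume {x ∈ A | m < f x} := tsub_le_tsub_left h2 _

end Median

section Osc
variable {f : En n → ℝ} {B lam : ℝ}

lemma rearr_nonneg (g : En n → ℝ) (A : Set (En n)) (t : ℝ≥0∞) : 0 ≤ rearr g A t :=
  Real.sInf_nonneg fun _ hs => hs.1

lemma B_nonneg (hB : ∀ x, |f x| ≤ B) : 0 ≤ B := le_trans (abs_nonneg _) (hB 0)

lemma vol_le_of_rearr_lt {g : En n → ℝ} {A : Set (En n)} {t : ℝ≥0∞} {s : ℝ}
    (hne : {s : ℝ | 0 ≤ s ∧ volume {x ∈ A | s < |g x|} ≤ t}.Nonempty)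
    (h : rearr g A t < s) : volume {x ∈ A | s < |g x|} ≤ t := by
  obtain ⟨s', hs', hlt⟩ := exists_lt_of_csInf_lt hne h
  refine le_trans (measure_mono ?_) hs'.2
  intro x hx
  exact ⟨hx.1, lt_trans hlt hx.2⟩

lemma oscW_nonneg (lam : ℝ) (f : En n → ℝ) (Q : Set (En n)) : 0 ≤ oscW lam f Q :=
  Real.iInf_nonneg fun _ => rearr_nonneg _ _ _

lemma oscW_le_B (hB : ∀ x, |f x| ≤ B) (lam : ℝ) (Q : Set (En n)) : oscW lam f Q ≤ B := by
  have h0 : BddBelow (Set.range fun c : ℝ => rearr (fun x => f x - c) Q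
      (ENNReal.ofReal lam * volume Q)) := by
    refine ⟨0, ?_⟩
    rintro - ⟨c, rfl⟩
    exact rearr_nonneg _ _ _
  refine le_trans (ciInf_le h0 0) ?_
  refine csInf_le ⟨0, fun s hs => hs.1⟩ ⟨B_nonneg hB, ?_⟩
  simp only [sub_zero]
  have : {x ∈ Q | B < |f x|} = ∅ := by
    ext x
    simp only [Set.mem_setOf_eq, Set.mem_empty_iff_false, iff_false, not_and, not_lt]
    exact fun _ => hB x
  simp [this]

lemma exists_osc_witness (hB : ∀ x, |f x| ≤ B) {C : Set (En n)} {s : ℝ}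
    (hs : oscW lam f C < s) :
    ∃ c : ℝ, volume {x ∈ C | s < |f x - c|} ≤ ENNReal.ofReal lam * volume C := by
  obtain ⟨c, hc⟩ := exists_lt_of_ciInf_lt hs
  refine ⟨c, vol_le_of_rearr_lt ⟨B + |c|, ⟨by have := B_nonneg hB; positivity, ?_⟩⟩ hc⟩
  have : {x ∈ C | B + |c| < |f x - c|} = ∅ := by
    ext x
    simp only [Set.mem_setOf_eq, Set.mem_empty_iff_false, iff_false, not_and, not_lt]
    intro _
    calc |f x - c| ≤ |f x| + |c| := abs_sub _ _
      _ ≤ B + |c| := by linarith [hB x]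
  simp [this]

/-- Any median of `f` on a large-enough subset of `C` is trapped near an osc-witness center. -/
lemma median_trap (hf : Measurable f) {A C : Set (En n)} {mA c s : ℝ}
    (hA : MeasurableSet A) (hAt : volume A ≠ ⊤)
    (hm : IsMedianOn f A mA) (hAC : A ⊆ C)
    (hhalf : ENNReal.ofReal lam * volume C < volume A / 2)
    (hc : volume {x ∈ C | s < |f x - c|} ≤ ENNReal.ofReal lam * volume C) :
    |mA - c| ≤ s := by
  rw [abs_le]
  have hhalves := median_halves hf hA hAt hm
  constructor
  · -- -s ≤ mA - c, i.e. mA ≥ c - s; suppose mA < c - s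
    by_contra hcon
    push_neg at hcon
    have hsub : {x ∈ A | f x ≤ mA} ⊆ {x ∈ C | s < |f x - c|} := by
      intro x hx
      refine ⟨hAC hx.1, ?_⟩
      have : f x - c < -s := by linarith [hx.2]
      calc s < -(f x - c) := by linarith
        _ ≤ |f x - c| := neg_le_abs _
    exact absurd (lt_of_le_of_lt (le_trans hhalves.2 (le_trans (measure_mono hsub) hc)) hhalf)
      (lt_irrefl _)
  · by_contra hcon
    push_neg at hcon
    have hsub : {x ∈ A | mA ≤ f x} ⊆ {x ∈ C | s < |f x - c|} := by
      intro x hx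
      refine ⟨hAC hx.1, ?_⟩
      calc s < f x - c := by linarith [hx.2]
        _ ≤ |f x - c| := le_abs_self _
    exact absurd (lt_of_le_of_lt (le_trans hhalves.1 (le_trans (measure_mono hsub) hc)) hhalf)
      (lt_irrefl _)

lemma vol_two_osc_le (hf : Measurable f) (hB : ∀ x, |f x| ≤ B) {A C : Set (En n)} {mA : ℝ}
    (hA : MeasurableSet A) (hAt : volume A ≠ ⊤) (hm : IsMedianOn f A mA) (hAC : A ⊆ C)
    (hhalf : ENNReal.ofReal lam * volume C < volume A / 2) :
    volume {x ∈ A | 2 * oscW lam f C < |f x - mA|} ≤ ENNReal.ofReal lam * volume C := by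
  set w := oscW lam f C with hw
  have key : ∀ k : ℕ, volume {x ∈ A | 2*(w + 1/(k+1)) < |f x - mA|} ≤
      ENNReal.ofReal lam * volume C := by
    intro k
    have hlt : w < w + 1/(k+1) := lt_add_of_pos_right _ (by positivity)
    obtain ⟨c, hc⟩ := exists_osc_witness hB hlt
    have htrap := median_trap hf hA hAt hm hAC hhalf hc
    refine le_trans (measure_mono ?_) hc
    intro x hx
    refine ⟨hAC hx.1, ?_⟩
    have h1 : |f x - mA| ≤ |f x - c| + |c - mA| := abs_sub_le _ _ _
    have h2 : |c - mA| = |mA - c| := abs_sub_comm _ _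
    have h3 := hx.2
    linarith
  have heq : {x ∈ A | 2*w < |f x - mA|} = ⋃ k : ℕ, {x ∈ A | 2*(w + 1/(k+1)) < |f x - mA|} := by
    ext x
    simp only [Set.mem_setOf_eq, Set.mem_iUnion]
    constructor
    · rintro ⟨hxA, hx⟩
      obtain ⟨k, hk⟩ := exists_nat_one_div_lt (show (0:ℝ) < (|f x - mA| - 2*w)/2 by linarith)
      exact ⟨k, hxA, by linarith⟩
    · rintro ⟨k, hxA, hx⟩
      refine ⟨hxA, ?_⟩
      have hp : (0:ℝ) < 1/((k:ℝ)+1) := by positivity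
      linarith
  have hmono : Monotone fun k : ℕ => {x ∈ A | 2*(w + 1/(k+1)) < |f x - mA|} := by
    intro k k' hk x hx
    refine ⟨hx.1, lt_of_le_of_lt ?_ hx.2⟩
    have : 1/((k':ℝ)+1) ≤ 1/((k:ℝ)+1) := by
      apply one_div_le_one_div_of_le (by positivity)
      exact_mod_cast add_le_add_left (Nat.cast_le.mpr hk) 1
    linarith
  rw [show 2 * w = 2*w from rfl] at *
  rw [heq, hmono.measure_iUnion]
  exact iSup_le key

lemma med_drift (hf : Measurable f) (hB : ∀ x, |f x| ≤ B) {A A' C : Set (En n)} {mA mA' : ℝ}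
    (hA : MeasurableSet A) (hAt : volume A ≠ ⊤) (hm : IsMedianOn f A mA) (hAC : A ⊆ C)
    (hA' : MeasurableSet A') (hA't : volume A' ≠ ⊤) (hm' : IsMedianOn f A' mA') (hA'C : A' ⊆ C)
    (hhalf : ENNReal.ofReal lam * volume C < volume A / 2)
    (hhalf' : ENNReal.ofReal lam * volume C < volume A' / 2) :
    |mA - mA'| ≤ 2 * oscW lam f C := by
  set w := oscW lam f C with hw
  refine le_of_forall_pos_le_add ?_
  intro ε hε
  obtain ⟨c, hc⟩ := exists_osc_witness hB (show w < w + ε/2 by linarith)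
  have t1 := median_trap hf hA hAt hm hAC hhalf hc
  have t2 := median_trap hf hA' hA't hm' hA'C hhalf' hc
  calc |mA - mA'| ≤ |mA - c| + |c - mA'| := abs_sub_le _ _ _
    _ ≤ (w + ε/2) + (w + ε/2) := by
        rw [abs_sub_comm c mA']
        linarith
    _ = 2*w + ε := by ring

lemma far_half (hf : Measurable f) {A P : Set (En n)} {mA mP w : ℝ}
    (hA : MeasurableSet A) (hAt : volume A ≠ ⊤) (hm : IsMedianOn f A mA) (hAP : A ⊆ P)
    (hfar : 2 * w < |mA - mP|) :
    volume A / 2 ≤ volume (A ∩ {x ∈ P | 2 * w < |f x - mP|}) := by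
  have hh := median_halves hf hA hAt hm
  rcases le_or_gt mA mP with h | h
  · have hlt : 2*w < mP - mA := by
      rw [abs_sub_comm, abs_of_nonneg (by linarith)] at hfar
      linarith
    refine le_trans hh.2 (measure_mono ?_)
    intro x hx
    refine ⟨hx.1, hAP hx.1, ?_⟩
    calc 2*w < mP - mA := hlt
      _ ≤ -(f x - mP) := by linarith [hx.2]
      _ ≤ |f x - mP| := neg_le_abs _
  · have hlt : 2*w < mA - mP := by
      rw [abs_of_nonneg (by linarith)] at hfar
      linarith
    refine le_trans hh.1 (measure_mono ?_)
    intro x hx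
    refine ⟨hx.1, hAP hx.1, ?_⟩
    calc 2*w < mA - mP := hlt
      _ ≤ f x - mP := by linarith [hx.2]
      _ ≤ |f x - mP| := le_abs_self _

lemma oscW_le_localSharp {Q₀ C : Set (En n)} {x : En n} (hB : ∀ x, |f x| ≤ B)
    (hC : IsCube C) (hx : x ∈ C) (hsub : C ⊆ Q₀) :
    oscW lam f C ≤ localSharp lam Q₀ f x := by
  have hbdd : BddAbove (Set.range fun Q : {Q : Set (En n) // IsCube Q ∧ x ∈ Q ∧ Q ⊆ Q₀} =>
      oscW lam f Q.1) := by
    refine ⟨B, ?_⟩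
    rintro - ⟨Q, rfl⟩
    exact oscW_le_B hB _ _
  exact le_ciSup hbdd ⟨C, hC, hx, hsub⟩

lemma localSharp_nonneg (lam : ℝ) (Q₀ : Set (En n)) (f : En n → ℝ) (x : En n) :
    0 ≤ localSharp lam Q₀ f x :=
  Real.iSup_nonneg fun _ => oscW_nonneg _ _ _

end Osc

section Boxes

def boxO (a : En n) (l : ℝ) : Set (En n) := {x | ∀ i, a i ≤ x i ∧ x i < a i + l}
def boxC (a : En n) (l : ℝ) : Set (En n) := {x | ∀ i, a i ≤ x i ∧ x i ≤ a i + l}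

lemma boxO_eq (a : En n) (l : ℝ) : boxO a l =
    ⇑(MeasurableEquiv.toLp 2 (Fin n → ℝ)).symm ⁻¹' Set.univ.pi (fun i => Ico (a i) (a i + l)) := by
  ext x
  simp only [boxO, Set.mem_preimage, Set.mem_pi, Set.mem_univ, forall_true_left, Set.mem_Ico,
    Set.mem_setOf_eq]
  rfl

lemma boxC_eq (a : En n) (l : ℝ) : boxC a l =
    ⇑(MeasurableEquiv.toLp 2 (Fin n → ℝ)).symm ⁻¹' Set.univ.pi (fun i => Icc (a i) (a i + l)) := by
  ext x
  simp only [boxC, Set.mem_preimage, Set.mem_pi, Set.mem_univ, forall_true_left, Set.mem_Icc,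
    Set.mem_setOf_eq]
  rfl

lemma measurableSet_boxO (a : En n) (l : ℝ) : MeasurableSet (boxO a l) := by
  rw [boxO_eq]
  exact (MeasurableSet.univ_pi fun i => measurableSet_Ico).preimage
    (MeasurableEquiv.toLp 2 (Fin n → ℝ)).symm.measurable

lemma measurableSet_boxC (a : En n) (l : ℝ) : MeasurableSet (boxC a l) := by
  rw [boxC_eq]
  exact (MeasurableSet.univ_pi fun i => measurableSet_Icc).preimage
    (MeasurableEquiv.toLp 2 (Fin n → ℝ)).symm.measurable

lemma volume_boxO (a : En n) {l : ℝ} (hl : 0 ≤ l) : volume (boxO a l) = ENNReal.ofReal (l ^ n) := by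
  rw [boxO_eq, (EuclideanSpace.volume_preserving_symm_measurableEquiv_toLp (Fin n)).measure_preimage
    ((MeasurableSet.univ_pi fun i => measurableSet_Ico).nullMeasurableSet)]
  rw [volume_pi_pi]
  simp [Real.volume_Ico, ENNReal.ofReal_pow hl]

lemma volume_boxC (a : En n) {l : ℝ} (hl : 0 ≤ l) : volume (boxC a l) = ENNReal.ofReal (l ^ n) := by
  rw [boxC_eq, (EuclideanSpace.volume_preserving_symm_measurableEquiv_toLp (Fin n)).measure_preimage
    ((MeasurableSet.univ_pi fun i => measurableSet_Icc).nullMeasurableSet)]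
  rw [volume_pi_pi]
  simp [Real.volume_Icc, ENNReal.ofReal_pow hl]

lemma boxO_subset_boxC (a : En n) (l : ℝ) : boxO a l ⊆ boxC a l :=
  fun x hx i => ⟨(hx i).1, (hx i).2.le⟩

lemma dist_le_of_mem_boxC {a : En n} {l : ℝ} (hl : 0 ≤ l) {x y : En n}
    (hx : x ∈ boxC a l) (hy : y ∈ boxC a l) : dist x y ≤ Real.sqrt n * l := by
  rw [EuclideanSpace.dist_eq]
  have : ∑ i, dist (x i) (y i) ^ 2 ≤ ∑ _i : Fin n, l ^ 2 := by
    apply Finset.sum_le_sum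
    intro i _
    have h1 := (hx i); have h2 := (hy i)
    have : |x i - y i| ≤ l := by
      rw [abs_le]; constructor <;> [linarith [h1.1, h2.2]; linarith [h1.2, h2.1]]
    calc dist (x i) (y i) ^ 2 = |x i - y i| ^ 2 := by rw [Real.dist_eq, sq_abs, ← sq_abs]
      _ ≤ l ^ 2 := by nlinarith [abs_nonneg (x i - y i)]
  calc Real.sqrt (∑ i, dist (x i) (y i) ^ 2) ≤ Real.sqrt (∑ _i : Fin n, l ^ 2) :=
        Real.sqrt_le_sqrt this
    _ = Real.sqrt n * l := by
        rw [Finset.sum_const, Finset.card_univ, Fintype.card_fin, nsmul_eq_mul,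
          Real.sqrt_mul (by positivity), Real.sqrt_sq hl]


lemma isCube_boxC (a : En n) {l : ℝ} (hl : 0 < l) : IsCube (boxC a l) :=
  ⟨a, l, hl, rfl⟩

lemma volume_boxO_pos (a : En n) {l : ℝ} (hl : 0 < l) : volume (boxO a l) ≠ 0 := by
  rw [volume_boxO a hl.le]
  simp only [ne_eq, ENNReal.ofReal_eq_zero, not_le]
  positivity

lemma volume_boxO_ne_top (a : En n) {l : ℝ} (hl : 0 ≤ l) : volume (boxO a l) ≠ ⊤ := by
  rw [volume_boxO a hl]; exact ENNReal.ofReal_ne_top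

end Boxes

section Dyadic

lemma floor_div_nat_real (u : ℝ) (d : ℕ) (hd : 0 < d) : ⌊u / (d:ℝ)⌋ = ⌊u⌋ / (d:ℤ) := by
  have hd' : (0:ℤ) < (d:ℤ) := by exact_mod_cast hd
  have hdr : (0:ℝ) < (d:ℝ) := by exact_mod_cast hd
  rw [Int.floor_eq_iff]
  constructor
  · rw [le_div_iff₀ hdr]
    calc ((⌊u⌋ / (d:ℤ) : ℤ) : ℝ) * d = ((⌊u⌋ / (d:ℤ) * d : ℤ) : ℝ) := by push_cast; ring
      _ ≤ ((⌊u⌋ : ℤ) : ℝ) := by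
          exact_mod_cast Int.ediv_mul_le ⌊u⌋ (ne_of_gt hd')
      _ ≤ u := Int.floor_le u
  · rw [div_lt_iff₀ hdr]
    have h1 : u < (⌊u⌋ : ℝ) + 1 := Int.lt_floor_add_one u
    have h2 : ⌊u⌋ + 1 ≤ (⌊u⌋ / (d:ℤ) + 1) * d := by
      have := Int.emod_add_mul_ediv ⌊u⌋ (d:ℤ)
      have hmod : ⌊u⌋ % (d:ℤ) < (d:ℤ) := Int.emod_lt_of_pos _ hd'
      nlinarith [Int.emod_nonneg ⌊u⌋ (ne_of_gt hd')]
    calc u < (⌊u⌋ : ℝ) + 1 := h1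
      _ ≤ ((⌊u⌋ / (d:ℤ) : ℤ) : ℝ) * d + 1 * d := by
          have : ((⌊u⌋ : ℤ) : ℝ) + 1 ≤ (((⌊u⌋ / (d:ℤ) + 1) * d : ℤ) : ℝ) := by exact_mod_cast h2
          push_cast at this ⊢
          linarith
      _ = (((⌊u⌋ / (d:ℤ) : ℤ) : ℝ) + 1) * d := by ring

variable {a : En n} {h : ℝ}

def djO (a : En n) (h : ℝ) (m : ℕ) (j : Fin n → ℤ) : Set (En n) :=
  boxO (WithLp.toLp 2 (fun i => a i + j i * (h / 2^m))) (h / 2^m)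

def djC (a : En n) (h : ℝ) (m : ℕ) (j : Fin n → ℤ) : Set (En n) :=
  boxC (WithLp.toLp 2 (fun i => a i + j i * (h / 2^m))) (h / 2^m)

def jOf (a : En n) (h : ℝ) (m : ℕ) (x : En n) : Fin n → ℤ :=
  fun i => ⌊(x i - a i) * 2^m / h⌋

lemma mem_djO_iff {m : ℕ} {j : Fin n → ℤ} {x : En n} :
    x ∈ djO a h m j ↔ ∀ i, a i + j i * (h / 2^m) ≤ x i ∧ x i < a i + j i * (h / 2^m) + h / 2^m :=
  Iff.rfl

lemma mem_djO_jOf (hh : 0 < h) (m : ℕ) (x : En n) : x ∈ djO a h m (jOf a h m x) := by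
  intro i
  have hl : (0:ℝ) < h / 2^m := by positivity
  have key : (x i - a i) * 2^m / h = (x i - a i) / (h / 2^m) := by
    field_simp
  have h1 : (⌊(x i - a i) / (h / 2^m)⌋ : ℝ) ≤ (x i - a i) / (h / 2^m) := Int.floor_le _
  have h2 : (x i - a i) / (h / 2^m) < ⌊(x i - a i) / (h / 2^m)⌋ + 1 := Int.lt_floor_add_one _
  rw [le_div_iff₀ hl] at h1
  rw [div_lt_iff₀ hl] at h2
  constructor
  · simp only [jOf, key]
    linarith
  · simp only [jOf, key]
    linarith

lemma jOf_eq_of_mem (hh : 0 < h) {m : ℕ} {j : Fin n → ℤ} {x : En n} (hx : x ∈ djO a h m j) :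
    jOf a h m x = j := by
  funext i
  have hl : (0:ℝ) < h / 2^m := by positivity
  have key : (x i - a i) * 2^m / h = (x i - a i) / (h / 2^m) := by field_simp
  obtain ⟨h1, h2⟩ := hx i
  rw [jOf, key]
  rw [Int.floor_eq_iff]
  constructor
  · rw [le_div_iff₀ hl]; linarith
  · rw [div_lt_iff₀ hl]; push_cast; linarith

lemma jOf_div (hh : 0 < h) {m m' : ℕ} (hmm : m ≤ m') (z : En n) :
    jOf a h m z = fun i => jOf a h m' z i / (2^(m'-m) : ℤ) := by
    funext i
    have hd : 0 < 2^(m'-m) := Nat.pow_pos (by norm_num)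
    have harg : (z i - a i) * 2^m / h = ((z i - a i) * 2^m' / h) / ((2^(m'-m) : ℕ) : ℝ) := by
      have : (2:ℝ)^m' = 2^m * 2^(m'-m) := by
        rw [← pow_add]
        congr 1
        omega
      push_cast
      rw [this]
      field_simp
    show ⌊(z i - a i) * 2^m / h⌋ = ⌊(z i - a i) * 2^m' / h⌋ / (2^(m'-m) : ℤ)
    rw [harg, floor_div_nat_real _ _ hd]
    congr 1
lemma jOf_ancestor (hh : 0 < h) {m m' : ℕ} (hmm : m ≤ m') {x y : En n}
    (hxy : jOf a h m' y = jOf a h m' x) : jOf a h m y = jOf a h m x := by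
  rw [jOf_div hh hmm y, jOf_div hh hmm x, hxy]

lemma djO_nested (hh : 0 < h) {m m' : ℕ} (hmm : m ≤ m') (x : En n) :
    djO a h m' (jOf a h m' x) ⊆ djO a h m (jOf a h m x) := by
  intro y hy
  have hy' : jOf a h m' y = jOf a h m' x := jOf_eq_of_mem hh hy
  have heq : jOf a h m y = jOf a h m x := jOf_ancestor hh hmm hy'
  rw [← heq]
  exact mem_djO_jOf hh m y

def InR (m : ℕ) (j : Fin n → ℤ) : Prop := ∀ i, 0 ≤ j i ∧ j i < 2^m

lemma jOf_InR (hh : 0 < h) {m : ℕ} {x : En n} (hx : x ∈ boxO a h) : InR m (jOf a h m x) := by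
  intro i
  obtain ⟨h1, h2⟩ := hx i
  have hpos : (0:ℝ) < h := hh
  constructor
  · apply Int.le_floor.mpr
    push_cast
    exact div_nonneg (mul_nonneg (by linarith) (by positivity)) hpos.le
  · apply Int.floor_lt.mpr
    push_cast
    rw [div_lt_iff₀ hpos]
    have hp : (0:ℝ) < 2^m := by positivity
    nlinarith

lemma djO_subset_djC (m : ℕ) (j : Fin n → ℤ) : djO a h m j ⊆ djC a h m j :=
  boxO_subset_boxC _ _

lemma isCube_djC (hh : 0 < h) (m : ℕ) (j : Fin n → ℤ) : IsCube (djC a h m j) :=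
  isCube_boxC _ (by positivity)

lemma volume_djO (hh : 0 < h) (m : ℕ) (j : Fin n → ℤ) :
    volume (djO a h m j) = ENNReal.ofReal ((h/2^m)^n) := volume_boxO _ (by positivity)

lemma volume_djC (hh : 0 < h) (m : ℕ) (j : Fin n → ℤ) :
    volume (djC a h m j) = ENNReal.ofReal ((h/2^m)^n) := volume_boxC _ (by positivity)

lemma djO_subset_boxO (hh : 0 < h) {m : ℕ} {j : Fin n → ℤ} (hj : InR m j) :
    djO a h m j ⊆ boxO a h := by
  intro x hx
  intro i
  obtain ⟨h1, h2⟩ := hx i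
  obtain ⟨hj1, hj2⟩ := hj i
  have hl : (0:ℝ) < h / 2^m := by positivity
  constructor
  · have : (0:ℝ) ≤ j i := by exact_mod_cast hj1
    nlinarith
  · have hcast : ((j i : ℝ) + 1) ≤ 2^m := by exact_mod_cast hj2
    have : ((j i : ℝ) + 1) * (h/2^m) ≤ 2^m * (h/2^m) := by nlinarith
    have h2m : (2:ℝ)^m * (h/2^m) = h := by field_simp
    nlinarith

lemma djC_subset_boxC (hh : 0 < h) {m : ℕ} {j : Fin n → ℤ} (hj : InR m j) :
    djC a h m j ⊆ boxC a h := by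
  intro x hx
  intro i
  obtain ⟨h1, h2⟩ := hx i
  obtain ⟨hj1, hj2⟩ := hj i
  have hl : (0:ℝ) < h / 2^m := by positivity
  constructor
  · have : (0:ℝ) ≤ j i := by exact_mod_cast hj1
    nlinarith
  · have hcast : ((j i : ℝ) + 1) ≤ 2^m := by exact_mod_cast hj2
    have : ((j i : ℝ) + 1) * (h/2^m) ≤ 2^m * (h/2^m) := by nlinarith
    have h2m : (2:ℝ)^m * (h/2^m) = h := by field_simp
    nlinarith

lemma djO_zero (a : En n) (h : ℝ) : djO a h 0 (fun _ => 0) = boxO a h := by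
  ext x
  simp [djO, boxO, mem_djO_iff]

lemma jOf_InR' (hh : 0 < h) {m : ℕ} {x : En n} (hx : x ∈ boxO a h) :
    InR m (jOf a h m x) := jOf_InR hh hx

/-- Dyadic density: a.e. point of a measurable set `s` has, eventually, more than half of its
dyadic cube inside `s`. -/
lemma dyadic_density (hh : 0 < h) (hn : 0 < n) {s : Set (En n)} (hs : MeasurableSet s) :
    ∀ᵐ x ∂(volume.restrict s), ∀ᶠ g : ℕ in Filter.atTop,
      volume (djO a h g (jOf a h g x)) / 2 < volume (djO a h g (jOf a h g x) ∩ s) := by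
  haveI : Nonempty (Fin n) := ⟨⟨0, hn⟩⟩
  have hbes := Besicovitch.ae_tendsto_measure_inter_div (volume : Measure (En n)) s
  filter_upwards [hbes] with x hx
  set κ := volume (Metric.ball (0 : En n) 1) with hκ
  have hκ0 : κ ≠ 0 := (measure_ball_pos _ _ one_pos).ne'
  have hκt : κ ≠ ⊤ := measure_ball_lt_top.ne
  set C := ENNReal.ofReal (Real.sqrt n ^ n) * κ with hC
  have hsn : (0:ℝ) < Real.sqrt n := Real.sqrt_pos.mpr (by exact_mod_cast hn)
  have hC0 : C ≠ 0 := by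
    simp only [hC, ne_eq, mul_eq_zero, ENNReal.ofReal_eq_zero, not_or, not_le]
    exact ⟨by positivity, hκ0⟩
  have hCt : C ≠ ⊤ := ENNReal.mul_ne_top ENNReal.ofReal_ne_top hκt
  -- radii
  set r : ℕ → ℝ := fun g => Real.sqrt n * (h / 2^g) with hr
  have hrpos : ∀ g, 0 < r g := fun g => by positivity
  have hrt : Filter.Tendsto r Filter.atTop (nhdsWithin 0 (Set.Ioi 0)) := by
    apply tendsto_nhdsWithin_of_tendsto_nhds_of_eventually_within
    · have : Filter.Tendsto (fun g : ℕ => (h/2^g)) Filter.atTop (nhds 0) := by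
        have h2 : Filter.Tendsto (fun g : ℕ => ((1:ℝ)/2)^g) Filter.atTop (nhds 0) :=
          tendsto_pow_atTop_nhds_zero_of_lt_one (by norm_num) (by norm_num)
        have := h2.const_mul h
        simpa [div_eq_mul_inv, mul_pow, mul_comm] using this
      simpa using this.const_mul (Real.sqrt n)
    · exact Filter.Eventually.of_forall fun g => hrpos g
  have hcomp := hx.comp hrt
  -- threshold
  set η := (4 * C)⁻¹ with hη
  have hη0 : η ≠ 0 := by
    simp only [hη, ne_eq, ENNReal.inv_eq_zero]
    exact ENNReal.mul_ne_top (by norm_num) hCt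
  set η₂ := min η 2⁻¹ with hη₂
  have hη₂0 : η₂ ≠ 0 := (lt_min (pos_iff_ne_zero.mpr hη0) (by norm_num)).ne'
  have hη₂le : η₂ ≤ 1 := le_trans (min_le_right _ _) (by norm_num)
  have hlt1 : 1 - η₂ < 1 := ENNReal.sub_lt_self one_ne_top one_ne_zero hη₂0
  have hev := hcomp.eventually (eventually_gt_nhds hlt1)
  filter_upwards [hev] with g hg
  simp only [Function.comp_apply] at hg
  set D := djO a h g (jOf a h g x) with hD
  set ℓ := h / 2^g with hℓ
  have hℓ0 : 0 < ℓ := by positivity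
  have hDvol : volume D = ENNReal.ofReal (ℓ^n) := volume_djO hh g _
  have hD0 : volume D ≠ 0 := by
    rw [hDvol]; simp only [ne_eq, ENNReal.ofReal_eq_zero, not_le]; positivity
  have hDt : volume D ≠ ⊤ := by rw [hDvol]; exact ENNReal.ofReal_ne_top
  have hDball : D ⊆ Metric.closedBall x (r g) := by
    intro y hy
    rw [Metric.mem_closedBall]
    have hxD : x ∈ djC a h g (jOf a h g x) := djO_subset_djC _ _ (mem_djO_jOf hh g x)
    have hyD : y ∈ djC a h g (jOf a h g x) := djO_subset_djC _ _ hy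
    exact dist_le_of_mem_boxC (l := ℓ) hℓ0.le hyD hxD
  have hball : volume (Metric.closedBall x (r g)) = C * volume D := by
    rw [MeasureTheory.Measure.addHaar_closedBall _ x (hrpos g).le, finrank_euclideanSpace_fin]
    rw [hDvol, hC]
    rw [show r g = Real.sqrt n * ℓ from rfl, mul_pow,
      ENNReal.ofReal_mul (by positivity)]
    ring
  have hball0 : volume (Metric.closedBall x (r g)) ≠ 0 := by
    rw [hball]; exact mul_ne_zero hC0 hD0
  have hballt : volume (Metric.closedBall x (r g)) ≠ ⊤ := by
    rw [hball]; exact ENNReal.mul_ne_top hCt hDt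
  have hg' : (1 - η₂) * volume (Metric.closedBall x (r g)) <
      volume (s ∩ Metric.closedBall x (r g)) :=
    (ENNReal.lt_div_iff_mul_lt (Or.inl hball0) (Or.inl hballt)).mp hg
  have hdiff : volume (Metric.closedBall x (r g) \ s) ≤ volume D / 4 := by
    have hsplit := measure_inter_add_diff (μ := volume) (Metric.closedBall x (r g)) hs
    have heq : volume (Metric.closedBall x (r g) \ s) =
        volume (Metric.closedBall x (r g)) - volume (s ∩ Metric.closedBall x (r g)) := by
      rw [Set.inter_comm s _]
      refine ENNReal.eq_sub_of_add_eq
        (ne_top_of_le_ne_top hballt (measure_mono Set.inter_subset_left)) ?_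
      rw [add_comm]
      exact hsplit
    rw [heq]
    calc volume (Metric.closedBall x (r g)) - volume (s ∩ Metric.closedBall x (r g))
        ≤ volume (Metric.closedBall x (r g)) - (1 - η₂) * volume (Metric.closedBall x (r g)) :=
          tsub_le_tsub_left hg'.le _
      _ = η₂ * volume (Metric.closedBall x (r g)) := by
          rw [ENNReal.sub_mul (fun _ _ => hballt), one_mul]
          exact ENNReal.sub_sub_cancel hballt
            (by calc η₂ * volume (Metric.closedBall x (r g)) ≤
                  1 * volume (Metric.closedBall x (r g)) := mul_le_mul_left hη₂le _
              _ = volume (Metric.closedBall x (r g)) := one_mul _)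
      _ ≤ η * volume (Metric.closedBall x (r g)) := mul_le_mul_left (min_le_left _ _) _
      _ = (4 * C)⁻¹ * (C * volume D) := by rw [hball]
      _ = 4⁻¹ * C⁻¹ * C * volume D := by
          rw [ENNReal.mul_inv (Or.inl (by norm_num)) (Or.inl (by norm_num))]
          ring
      _ = 4⁻¹ * volume D := by
          rw [mul_assoc 4⁻¹, ENNReal.inv_mul_cancel hC0 hCt, mul_one]
      _ = volume D / 4 := by rw [ENNReal.div_eq_inv_mul]
  by_contra hcon
  push_neg at hcon
  have hDdiff : volume (D \ s) ≤ volume D / 4 := by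
    refine le_trans (measure_mono ?_) hdiff
    intro y hy
    exact ⟨hDball hy.1, hy.2⟩
  have hcover : volume D ≤ volume (D ∩ s) + volume (D \ s) := by
    refine le_trans (measure_mono ?_) (measure_union_le _ _)
    rw [Set.inter_union_diff]
  have hfrac : volume D / 4 < volume D / 2 := by
    rw [ENNReal.div_eq_inv_mul, ENNReal.div_eq_inv_mul]
    refine ENNReal.mul_lt_mul_iff_left hD0 hDt |>.mpr ?_
    exact ENNReal.inv_lt_inv.mpr (by norm_num)
  have : volume D < volume D := by
    calc volume D ≤ volume (D ∩ s) + volume (D \ s) := hcover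
      _ ≤ volume D / 2 + volume (D \ s) := add_le_add_left hcon _
      _ < volume D / 2 + volume D / 2 := by
          refine ENNReal.add_lt_add_left (by
            exact ne_top_of_le_ne_top hDt (ENNReal.half_le_self)) (lt_of_le_of_lt hDdiff hfrac)
      _ = volume D := ENNReal.add_halves _
  exact absurd this (lt_irrefl _)

lemma measurableSet_djO (a : En n) (h : ℝ) (m : ℕ) (j : Fin n → ℤ) :
    MeasurableSet (djO a h m j) := measurableSet_boxO _ _

lemma volume_djO_pos (hh : 0 < h) (m : ℕ) (j : Fin n → ℤ) : volume (djO a h m j) ≠ 0 := by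
  rw [volume_djO hh]
  simp only [ne_eq, ENNReal.ofReal_eq_zero, not_le]
  positivity

lemma volume_djO_ne_top (hh : 0 < h) (m : ℕ) (j : Fin n → ℤ) : volume (djO a h m j) ≠ ⊤ := by
  rw [volume_djO hh]; exact ENNReal.ofReal_ne_top

end Dyadic

section MedConv
variable {a : En n} {h : ℝ} {f : En n → ℝ} {B : ℝ}

lemma med_ge_of_half (hh : 0 < h) (hf : Measurable f) (hB : ∀ x, |f x| ≤ B)
    {g : ℕ} {j : Fin n → ℤ} {q : ℝ}
    (hhalf : volume (djO a h g j) / 2 < volume (djO a h g j ∩ {x | q < f x})) :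
    q ≤ medOn f (djO a h g j) := by
  by_contra hcon
  push_neg at hcon
  have hmed := isMedianOn_medOn hf hB (measurableSet_djO a h g j)
    (volume_djO_pos hh g j) (volume_djO_ne_top hh g j)
  have hsub : djO a h g j ∩ {x | q < f x} ⊆ {x ∈ djO a h g j | medOn f (djO a h g j) < f x} := by
    intro x hx
    exact ⟨hx.1, lt_trans hcon hx.2⟩
  exact absurd (lt_of_lt_of_le (lt_of_lt_of_le hhalf (measure_mono hsub)) hmed.1)
    (lt_irrefl _)

lemma med_le_of_half (hh : 0 < h) (hf : Measurable f) (hB : ∀ x, |f x| ≤ B)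
    {g : ℕ} {j : Fin n → ℤ} {q : ℝ}
    (hhalf : volume (djO a h g j) / 2 < volume (djO a h g j ∩ {x | f x < q})) :
    medOn f (djO a h g j) ≤ q := by
  by_contra hcon
  push_neg at hcon
  have hmed := isMedianOn_medOn hf hB (measurableSet_djO a h g j)
    (volume_djO_pos hh g j) (volume_djO_ne_top hh g j)
  have hsub : djO a h g j ∩ {x | f x < q} ⊆ {x ∈ djO a h g j | f x < medOn f (djO a h g j)} := by
    intro x hx
    exact ⟨hx.1, lt_trans hx.2 hcon⟩
  exact absurd (lt_of_lt_of_le (lt_of_lt_of_le hhalf (measure_mono hsub)) hmed.2)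
    (lt_irrefl _)

lemma med_conv (hh : 0 < h) (hn : 0 < n) (hf : Measurable f) (hB : ∀ x, |f x| ≤ B) :
    ∀ᵐ x : En n, ∀ ε : ℝ, 0 < ε → ∀ m₀ : ℕ, ∃ i : ℕ, 1 ≤ i ∧
      |medOn f (djO a h (m₀+i) (jOf a h (m₀+i) x)) - f x| ≤ ε := by
  have main : ∀ q : ℚ, ∀ᵐ x : En n,
      (((q:ℝ) < f x → ∀ᶠ g : ℕ in Filter.atTop,
        (q:ℝ) ≤ medOn f (djO a h g (jOf a h g x))) ∧
      (f x < (q:ℝ) → ∀ᶠ g : ℕ in Filter.atTop,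
        medOn f (djO a h g (jOf a h g x)) ≤ (q:ℝ))) := by
    intro q
    have hs₁ : MeasurableSet {x : En n | (q:ℝ) < f x} := hf measurableSet_Ioi
    have hs₂ : MeasurableSet {x : En n | f x < (q:ℝ)} := hf measurableSet_Iio
    have hd₁ := (ae_restrict_iff' hs₁).mp (dyadic_density (a := a) hh hn hs₁)
    have hd₂ := (ae_restrict_iff' hs₂).mp (dyadic_density (a := a) hh hn hs₂)
    filter_upwards [hd₁, hd₂] with x hx₁ hx₂
    constructor
    · intro hq
      filter_upwards [hx₁ hq] with g hg
      exact med_ge_of_half hh hf hB hg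
    · intro hq
      filter_upwards [hx₂ hq] with g hg
      exact med_le_of_half hh hf hB hg
  have hall : ∀ᵐ x : En n, ∀ q : ℚ,
      (((q:ℝ) < f x → ∀ᶠ g : ℕ in Filter.atTop,
        (q:ℝ) ≤ medOn f (djO a h g (jOf a h g x))) ∧
      (f x < (q:ℝ) → ∀ᶠ g : ℕ in Filter.atTop,
        medOn f (djO a h g (jOf a h g x)) ≤ (q:ℝ))) := ae_all_iff.mpr main
  filter_upwards [hall] with x hx ε hε m₀
  obtain ⟨q₁, hq₁a, hq₁b⟩ := exists_rat_btwn (show f x - ε < f x by linarith)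
  obtain ⟨q₂, hq₂a, hq₂b⟩ := exists_rat_btwn (show f x < f x + ε by linarith)
  obtain ⟨N₁, hN₁⟩ := Filter.eventually_atTop.mp ((hx q₁).1 hq₁b)
  obtain ⟨N₂, hN₂⟩ := Filter.eventually_atTop.mp ((hx q₂).2 hq₂a)
  refine ⟨max (max N₁ N₂) (m₀+1) - m₀, by omega, ?_⟩
  set g := m₀ + (max (max N₁ N₂) (m₀+1) - m₀) with hg
  have hgN₁ : N₁ ≤ g := by omega
  have hgN₂ : N₂ ≤ g := by omega
  have h1 := hN₁ g hgN₁
  have h2 := hN₂ g hgN₂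
  rw [abs_le]
  constructor <;> linarith

end MedConv

section Claim
variable {a : En n} {h : ℝ} {f : En n → ℝ} {B : ℝ}

lemma measurableSet_sep_abs (hf : Measurable f) {P : Set (En n)} (hP : MeasurableSet P)
    (c w : ℝ) : MeasurableSet {x ∈ P | w < |f x - c|} := by
  have : {x ∈ P | w < |f x - c|} = P ∩ (fun x => |f x - c|) ⁻¹' Set.Ioi w := rfl
  rw [this]
  exact hP.inter (((hf.sub measurable_const).abs) measurableSet_Ioi)

theorem main_claim (hh : 0 < h) (hn : 0 < n) (hf : Measurable f) (hB : ∀ x, |f x| ≤ B)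
    (k : ℕ) :
    ∀ (m : ℕ) (j : Fin n → ℤ), InR m j →
      volume {x ∈ djO a h m j |
          6*k * localSharp (1/2^(n+2)) (boxC a h) f x < |f x - medOn f (djO a h m j)|} ≤
        (2⁻¹ : ℝ≥0∞)^k * volume (djO a h m j) := by
  set lam : ℝ := 1/2^(n+2) with hlam
  have hlam0 : 0 < lam := by rw [hlam]; positivity
  have hlam4 : lam ≤ 1/4 := by
    rw [hlam]
    rw [div_le_div_iff₀ (by positivity) (by norm_num)]
    have : (2:ℝ)^2 ≤ 2^(n+2) := pow_le_pow_right₀ one_le_two (by omega)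
    nlinarith
  set M : En n → ℝ := localSharp lam (boxC a h) f with hM
  have hM0 : ∀ x, 0 ≤ M x := fun x => localSharp_nonneg _ _ _ _
  -- half-measure facts
  have hhalf : ∀ (g : ℕ) (j' j'' : Fin n → ℤ),
      ENNReal.ofReal lam * volume (djC a h g j') < volume (djO a h g j'') / 2 := by
    intro g j' j''
    rw [volume_djC hh, volume_djO hh]
    set t := (h/2^g)^n with hts
    have ht : 0 < t := by rw [hts]; positivity
    calc ENNReal.ofReal lam * ENNReal.ofReal t = ENNReal.ofReal (lam * t) :=
          (ENNReal.ofReal_mul hlam0.le).symm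
      _ < ENNReal.ofReal (t/2) := by
          rw [ENNReal.ofReal_lt_ofReal_iff (by positivity)]
          nlinarith
      _ = ENNReal.ofReal t / 2 := by
          rw [ENNReal.ofReal_div_of_pos (by norm_num)]
          norm_num
  have hhalfchild : ∀ (g : ℕ) (j' j'' : Fin n → ℤ),
      ENNReal.ofReal lam * volume (djC a h g j') < volume (djO a h (g+1) j'') / 2 := by
    intro g j' j''
    rw [volume_djC hh, volume_djO hh]
    have e : (h/2^(g+1))^n = (h/2^g)^n / 2^n := by
      rw [show h / 2^(g+1) = (h/2^g)/2 by rw [pow_succ]; ring, div_pow]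
    rw [e]
    set t := (h/2^g)^n with htdef
    have ht : 0 < t := by rw [htdef]; positivity
    have h2npos : (0:ℝ) < 2^n := by positivity
    have key : lam * t < t/2^n/2 := by
      rw [hlam, show (2:ℝ)^(n+2) = 2^n*4 by rw [pow_add]; norm_num]
      rw [div_div, div_mul_eq_mul_div, div_lt_div_iff₀ (by positivity) (by positivity)]
      nlinarith
    calc ENNReal.ofReal lam * ENNReal.ofReal t = ENNReal.ofReal (lam * t) :=
          (ENNReal.ofReal_mul hlam0.le).symm
      _ < ENNReal.ofReal (t/2^n/2) := by
          rw [ENNReal.ofReal_lt_ofReal_iff (by positivity)]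
          exact key
      _ = ENNReal.ofReal (t/2^n) / 2 := by
          rw [ENNReal.ofReal_div_of_pos (show (0:ℝ) < 2 by norm_num)]
          norm_num
  induction k with
  | zero =>
    intro m j hj
    simpa using measure_mono (Set.sep_subset _ _)
  | succ k ih =>
    intro m j hj
    simp only [Nat.cast_add, Nat.cast_one]
    set P := djO a h m j with hP
    set μ := medOn f P with hμ
    set w := oscW lam f (djC a h m j) with hw
    have hw0 : 0 ≤ w := oscW_nonneg _ _ _
    have hPmeas : MeasurableSet P := measurableSet_djO a h m j
    have hPne : volume P ≠ 0 := volume_djO_pos hh m j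
    have hPt : volume P ≠ ⊤ := volume_djO_ne_top hh m j
    have hmedP : IsMedianOn f P μ := isMedianOn_medOn hf hB hPmeas hPne hPt
    set E := {x ∈ P | 6*((k:ℝ)+1) * M x < |f x - μ|} with hE
    set A₀ := {x ∈ P | 2*w < |f x - μ|} with hA₀
    have hA₀meas : MeasurableSet A₀ := measurableSet_sep_abs hf hPmeas μ (2*w)
    have hA₀vol : volume A₀ ≤ ENNReal.ofReal lam * volume (djC a h m j) :=
      vol_two_osc_le hf hB hPmeas hPt hmedP (djO_subset_djC _ _) (hhalf m j j)
    classical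
    set Bdy : En n → ℕ → Prop :=
      fun y i => 2*w < |medOn f (djO a h (m+i) (jOf a h (m+i) y)) - μ| with hBdy
    set BadIdx : En n → Set ℕ := fun y => {i | 1 ≤ i ∧ Bdy y i} with hBadIdx
    set ι : En n → ℕ := fun y => sInf (BadIdx y) with hι
    set T : Set (ℕ × (Fin n → ℤ)) :=
      {p | ∃ y, (y ∈ P ∧ (BadIdx y).Nonempty) ∧ p = (m + ι y, jOf a h (m + ι y) y)} with hT
    set F : ℕ × (Fin n → ℤ) → Set (En n) := fun p => djO a h p.1 p.2 with hF
    have hι_mem : ∀ y, (BadIdx y).Nonempty → 1 ≤ ι y ∧ Bdy y (ι y) := fun y hne =>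
      Nat.sInf_mem hne
    have hFP : ∀ y, y ∈ P → F (m + ι y, jOf a h (m + ι y) y) ⊆ P := by
      intro y hyP
      have h1 : djO a h (m + ι y) (jOf a h (m + ι y) y) ⊆ djO a h m (jOf a h m y) :=
        djO_nested hh (by omega) y
      rwa [jOf_eq_of_mem hh hyP] at h1
    have htrans : ∀ y z, (BadIdx y).Nonempty →
        z ∈ F (m + ι y, jOf a h (m + ι y) y) → ι y ∈ BadIdx z ∧
          jOf a h (m + ι y) z = jOf a h (m + ι y) y := by
      intro y z hne hz
      have hjz : jOf a h (m + ι y) z = jOf a h (m + ι y) y := jOf_eq_of_mem hh hz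
      obtain ⟨hι1, hιbad⟩ := hι_mem y hne
      refine ⟨⟨hι1, ?_⟩, hjz⟩
      show 2*w < |medOn f (djO a h (m + ι y) (jOf a h (m + ι y) z)) - μ|
      rw [hjz]
      exact hιbad
    have hdisj_aux : ∀ y z, (BadIdx y).Nonempty → (BadIdx z).Nonempty →
        ι y ≤ ι z →
        (F (m + ι y, jOf a h (m + ι y) y) ∩ F (m + ι z, jOf a h (m + ι z) z)).Nonempty →
        ((m + ι y, jOf a h (m + ι y) y) : ℕ × (Fin n → ℤ)) =
          (m + ι z, jOf a h (m + ι z) z) := by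
      rintro y z hney hnez hle ⟨u, hu1, hu2⟩
      have hjy : jOf a h (m + ι y) u = jOf a h (m + ι y) y := jOf_eq_of_mem hh hu1
      have hjz : jOf a h (m + ι z) u = jOf a h (m + ι z) z := jOf_eq_of_mem hh hu2
      have hsub : F (m + ι z, jOf a h (m + ι z) z) ⊆ F (m + ι y, jOf a h (m + ι y) y) := by
        show djO a h (m + ι z) (jOf a h (m + ι z) z) ⊆ djO a h (m + ι y) (jOf a h (m + ι y) y)
        rw [← hjz, ← hjy]
        exact djO_nested hh (by omega) u
      have hzin : z ∈ F (m + ι y, jOf a h (m + ι y) y) := hsub (mem_djO_jOf hh _ z)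
      obtain ⟨hmem, hjeq⟩ := htrans y z hney hzin
      have hzley : ι z ≤ ι y := Nat.sInf_le hmem
      have heq : ι y = ι z := le_antisymm hle hzley
      have h2 : jOf a h (m + ι y) y = jOf a h (m + ι z) z := by
        calc jOf a h (m + ι y) y = jOf a h (m + ι y) z := hjeq.symm
          _ = jOf a h (m + ι z) z := by rw [heq]
      rw [heq] at h2 ⊢
      rw [h2]
    have hTc : T.Countable := Set.to_countable T
    have hTdisj : T.PairwiseDisjoint F := by
      intro p hp q hq hpq
      obtain ⟨y, ⟨hyP, hney⟩, rfl⟩ := hp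
      obtain ⟨z, ⟨hzP, hnez⟩, rfl⟩ := hq
      rw [Function.onFun]
      by_contra hcon
      rw [Set.not_disjoint_iff_nonempty_inter] at hcon
      rcases le_total (ι y) (ι z) with hle | hle
      · exact hpq (hdisj_aux y z hney hnez hle hcon)
      · exact hpq ((hdisj_aux z y hnez hney hle (by rwa [Set.inter_comm] at hcon)).symm)
    have hfar_half : ∀ p ∈ T, volume (F p) ≤ 2 * volume (F p ∩ A₀) := by
      intro p hp
      obtain ⟨y, ⟨hyP, hney⟩, rfl⟩ := hp
      have hFmeas : MeasurableSet (djO a h (m + ι y) (jOf a h (m + ι y) y)) :=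
        measurableSet_djO _ _ _ _
      have hFt : volume (djO a h (m + ι y) (jOf a h (m + ι y) y)) ≠ ⊤ :=
        volume_djO_ne_top hh _ _
      have hmedF : IsMedianOn f (djO a h (m + ι y) (jOf a h (m + ι y) y))
          (medOn f (djO a h (m + ι y) (jOf a h (m + ι y) y))) :=
        isMedianOn_medOn hf hB hFmeas (volume_djO_pos hh _ _) hFt
      have hfar : 2*w < |medOn f (djO a h (m + ι y) (jOf a h (m + ι y) y)) - μ| :=
        (hι_mem y hney).2
      have hkey := far_half hf hFmeas hFt hmedF (hFP y hyP) hfar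
      calc volume (F (m + ι y, jOf a h (m + ι y) y))
          = volume (djO a h (m + ι y) (jOf a h (m + ι y) y)) / 2 * 2 :=
            (ENNReal.div_mul_cancel (by norm_num) (by norm_num)).symm
        _ ≤ volume (djO a h (m + ι y) (jOf a h (m + ι y) y) ∩ A₀) * 2 :=
            mul_le_mul_left hkey 2
        _ = 2 * volume (F (m + ι y, jOf a h (m + ι y) y) ∩ A₀) := mul_comm _ _
    have hdrift : ∀ y, y ∈ P → (BadIdx y).Nonempty → ∀ x ∈ F (m + ι y, jOf a h (m + ι y) y),
        |medOn f (djO a h (m + ι y) (jOf a h (m + ι y) y)) - μ| ≤ 4 * M x := by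
      intro y hyP hney x hx
      obtain ⟨hι1, hιbad⟩ := hι_mem y hney
      set g' := m + ι y - 1 with hg'
      have hgg : m + ι y = g' + 1 := by omega
      set w' := oscW lam f (djC a h g' (jOf a h g' y)) with hw'
      have hchild : djO a h (m + ι y) (jOf a h (m + ι y) y) ⊆ djO a h g' (jOf a h g' y) :=
        djO_nested hh (by omega) y
      have hd : |medOn f (djO a h g' (jOf a h g' y)) -
          medOn f (djO a h (m + ι y) (jOf a h (m + ι y) y))| ≤ 2 * w' := by
        refine med_drift hf hB (measurableSet_djO _ _ _ _) (volume_djO_ne_top hh _ _)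
          (isMedianOn_medOn hf hB (measurableSet_djO _ _ _ _) (volume_djO_pos hh _ _)
            (volume_djO_ne_top hh _ _))
          (djO_subset_djC _ _)
          (measurableSet_djO _ _ _ _) (volume_djO_ne_top hh _ _)
          (isMedianOn_medOn hf hB (measurableSet_djO _ _ _ _) (volume_djO_pos hh _ _)
            (volume_djO_ne_top hh _ _))
          (subset_trans hchild (djO_subset_djC _ _))
          (hhalf g' _ _) ?_
        rw [hgg]
        exact hhalfchild g' _ _
      have hpar : |medOn f (djO a h g' (jOf a h g' y)) - μ| ≤ 2 * w := by
        rcases Nat.lt_or_ge 1 (ι y) with h1 | h1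
        · have hlt : ι y - 1 < ι y := by omega
          have hnot : (ι y - 1) ∉ BadIdx y := Nat.notMem_of_lt_sInf hlt
          have h1' : 1 ≤ ι y - 1 := by omega
          have hnb : ¬ Bdy y (ι y - 1) := fun hb => hnot ⟨h1', hb⟩
          have heqg : m + (ι y - 1) = g' := by omega
          have hthis : ¬ (2*w <
              |medOn f (djO a h (m + (ι y - 1)) (jOf a h (m + (ι y - 1)) y)) - μ|) := hnb
          rw [heqg] at hthis
          exact not_lt.mp hthis
        · have hg'm : g' = m := by omega
          have hjm : jOf a h m y = j := jOf_eq_of_mem hh hyP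
          rw [hg'm, hjm, ← hP, ← hμ]
          simp only [sub_self, abs_zero]
          linarith
      have hxpar : x ∈ djC a h g' (jOf a h g' y) := djO_subset_djC _ _ (hchild hx)
      have hbox : y ∈ boxO a h := djO_subset_boxO hh hj hyP
      have hInR1 : InR g' (jOf a h g' y) := jOf_InR hh hbox
      have hw'M : w' ≤ M x :=
        oscW_le_localSharp hB (isCube_djC hh _ _) hxpar (djC_subset_boxC hh hInR1)
      have hxC2 : x ∈ djC a h m j := djO_subset_djC _ _ (hFP y hyP hx)
      have hwM : w ≤ M x := oscW_le_localSharp hB (isCube_djC hh _ _) hxC2 (djC_subset_boxC hh hj)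
      calc |medOn f (djO a h (m + ι y) (jOf a h (m + ι y) y)) - μ|
          ≤ |medOn f (djO a h (m + ι y) (jOf a h (m + ι y) y)) -
              medOn f (djO a h g' (jOf a h g' y))|
            + |medOn f (djO a h g' (jOf a h g' y)) - μ| := abs_sub_le _ _ _
        _ ≤ 2*w' + 2*w := add_le_add (by rw [abs_sub_comm]; exact hd) hpar
        _ ≤ 4 * M x := by linarith
    -- a.e. median convergence
    have hae := med_conv (a := a) (h := h) (f := f) hh hn hf hB
    set N := {x : En n | ¬ ∀ ε : ℝ, 0 < ε → ∀ m₀ : ℕ, ∃ i, 1 ≤ i ∧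
      |medOn f (djO a h (m₀+i) (jOf a h (m₀+i) x)) - f x| ≤ ε} with hN
    have hNnull : volume N = 0 := by
      have := ae_iff.mp hae
      exact this
    have hcover : ∀ x ∈ E, x ∉ N → x ∈ ⋃ p ∈ T, F p := by
      intro x hxE hxN
      obtain ⟨hx1, hx2⟩ := hxE
      have hconv : ∀ ε : ℝ, 0 < ε → ∀ m₀ : ℕ, ∃ i, 1 ≤ i ∧
          |medOn f (djO a h (m₀+i) (jOf a h (m₀+i) x)) - f x| ≤ ε := by
        by_contra hcon
        exact hxN hcon
      by_cases hbad : (BadIdx x).Nonempty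
      · exact Set.mem_biUnion ⟨x, ⟨hx1, hbad⟩, rfl⟩ (mem_djO_jOf hh _ x)
      · exfalso
        have hnear : ∀ i, 1 ≤ i →
            |medOn f (djO a h (m+i) (jOf a h (m+i) x)) - μ| ≤ 2*w := by
          intro i hi
          by_contra hcon
          push_neg at hcon
          exact hbad ⟨i, hi, hcon⟩
        have hfx : |f x - μ| ≤ 2*w := by
          refine le_of_forall_pos_le_add ?_
          intro ε hε
          obtain ⟨i, hi1, hi2⟩ := hconv ε hε m
          calc |f x - μ| ≤ |f x - medOn f (djO a h (m+i) (jOf a h (m+i) x))| +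
                |medOn f (djO a h (m+i) (jOf a h (m+i) x)) - μ| := abs_sub_le _ _ _
            _ ≤ ε + 2*w := add_le_add (by rw [abs_sub_comm]; exact hi2) (hnear i hi1)
            _ = 2*w + ε := by ring
        have hMx := hM0 x
        have hwM : w ≤ M x := oscW_le_localSharp hB (isCube_djC hh m j)
          (djO_subset_djC _ _ hx1) (djC_subset_boxC hh hj)
        have hk0 : (0:ℝ) ≤ (k:ℝ) := Nat.cast_nonneg k
        nlinarith [hx2]
    have hEsub : E ⊆ N ∪ ⋃ p ∈ T, (E ∩ F p) := by
      intro x hxE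
      by_cases hxN : x ∈ N
      · exact Or.inl hxN
      · right
        obtain ⟨R, hR1, hR2⟩ := Set.mem_iUnion₂.mp (hcover x hxE hxN)
        exact Set.mem_biUnion hR1 ⟨hxE, hR2⟩
    -- per-cube bound via induction hypothesis
    have hterm : ∀ p ∈ T, volume (E ∩ F p) ≤ (2⁻¹:ℝ≥0∞)^k * volume (F p) := by
      intro p hp
      obtain ⟨y, ⟨hyP, hney⟩, rfl⟩ := hp
      have hInR : InR (m + ι y) (jOf a h (m + ι y) y) :=
        jOf_InR hh (djO_subset_boxO hh hj hyP)
      have hsub : E ∩ F (m + ι y, jOf a h (m + ι y) y) ⊆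
          {x ∈ djO a h (m + ι y) (jOf a h (m + ι y) y) |
            6*(k:ℝ) * M x < |f x - medOn f (djO a h (m + ι y) (jOf a h (m + ι y) y))|} := by
        rintro x ⟨hxE, hxF⟩
        obtain ⟨hx1, hx2⟩ := hxE
        have hdr := hdrift y hyP hney x hxF
        refine ⟨hxF, ?_⟩
        have htri : |f x - μ| ≤ |f x - medOn f (djO a h (m + ι y) (jOf a h (m + ι y) y))| +
            |medOn f (djO a h (m + ι y) (jOf a h (m + ι y) y)) - μ| := abs_sub_le _ _ _
        have hMx := hM0 x
        nlinarith
      exact le_trans (measure_mono hsub) (ih (m + ι y) _ hInR)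
    -- sum of selected cube volumes
    have hsum : ∑' p : T, volume (F p) ≤ 2 * (ENNReal.ofReal lam * volume (djC a h m j)) := by
      have hdisj2 : T.PairwiseDisjoint (fun p => F p ∩ A₀) :=
        hTdisj.mono fun p => Set.inter_subset_left
      calc ∑' p : T, volume (F p) ≤ ∑' p : T, 2 * volume (F p ∩ A₀) :=
            ENNReal.tsum_le_tsum fun p => hfar_half p.1 p.2
        _ = 2 * ∑' p : T, volume (F p ∩ A₀) := ENNReal.tsum_mul_left
        _ = 2 * volume (⋃ p ∈ T, (F p ∩ A₀)) := by
            rw [measure_biUnion hTc hdisj2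
              (fun p _ => (measurableSet_djO _ _ _ _).inter hA₀meas)]
        _ ≤ 2 * volume A₀ := by
            refine mul_le_mul_right (measure_mono ?_) 2
            exact Set.iUnion₂_subset fun p _ => Set.inter_subset_right
        _ ≤ 2 * (ENNReal.ofReal lam * volume (djC a h m j)) := mul_le_mul_right hA₀vol 2
    -- final chain
    have hfinal : (2⁻¹:ℝ≥0∞)^k * (2 * (ENNReal.ofReal lam * volume (djC a h m j))) ≤
        (2⁻¹:ℝ≥0∞)^(k+1) * volume P := by
      have hv : volume (djC a h m j) = volume P := by
        rw [hP, volume_djC hh, volume_djO hh]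
      rw [hv, pow_succ]
      rw [mul_assoc]
      refine mul_le_mul_right ?_ _
      -- 2 * (ofReal lam * volume P) ≤ 2⁻¹ * volume P
      have hl : ENNReal.ofReal lam ≤ ENNReal.ofReal (1/4) := ENNReal.ofReal_le_ofReal hlam4
      have h14 : ENNReal.ofReal (1/4 : ℝ) = 4⁻¹ := by
        rw [ENNReal.ofReal_div_of_pos (by norm_num)]
        norm_num
      calc 2 * (ENNReal.ofReal lam * volume P) ≤ 2 * (4⁻¹ * volume P) := by
            refine mul_le_mul_right (mul_le_mul_left ?_ _) 2
            rw [← h14]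
            exact hl
        _ = (2 * 4⁻¹) * volume P := by ring
        _ = 2⁻¹ * volume P := by
            congr 1
            rw [show ((4:ℝ≥0∞))⁻¹ = (2*2)⁻¹ by norm_num]
            rw [ENNReal.mul_inv (by norm_num) (by norm_num)]
            rw [← mul_assoc, ENNReal.mul_inv_cancel (by norm_num) (by norm_num), one_mul]
    calc volume E ≤ volume N + volume (⋃ p ∈ T, (E ∩ F p)) :=
          le_trans (measure_mono hEsub) (measure_union_le _ _)
      _ = volume (⋃ p ∈ T, (E ∩ F p)) := by rw [hNnull, zero_add]
      _ ≤ ∑' p : T, volume (E ∩ F p) := measure_biUnion_le _ hTc _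
      _ ≤ ∑' p : T, (2⁻¹:ℝ≥0∞)^k * volume (F p) :=
          ENNReal.tsum_le_tsum fun p => hterm p.1 p.2
      _ = (2⁻¹:ℝ≥0∞)^k * ∑' p : T, volume (F p) := ENNReal.tsum_mul_left
      _ ≤ (2⁻¹:ℝ≥0∞)^k * (2 * (ENNReal.ofReal lam * volume (djC a h m j))) :=
          mul_le_mul_right hsum _
      _ ≤ (2⁻¹:ℝ≥0∞)^(k+1) * volume P := hfinal

lemma djC_zero (a : En n) (h : ℝ) : djC a h 0 (fun _ => 0) = boxC a h := by
  ext x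
  simp [djC, boxC]

end Claim
end JS

/-- John–Strömberg–Fefferman–Stein type exponential decay estimate:
`|{x ∈ Q : |f(x) − m_f(Q)| > t·M^#_{2^{−n−2};Q}f(x)}| ≤ c e^{−αt}|Q|`. -/
theorem exponential_decay_local_sharp (n : ℕ) :
    ∃ c > (0:ℝ), ∃ α > (0:ℝ), ∀ (Q : Set (En n)) (f : En n → ℝ) (m : ℝ),
      IsCube Q → Measurable f → (∃ B, ∀ x, |f x| ≤ B) → Function.support f ⊆ Q →
      IsMedianOn f Q m → ∀ t > (0:ℝ),
        volume {x ∈ Q | t * localSharp (1 / 2 ^ (n + 2)) Q f x < |f x - m|} ≤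
          ENNReal.ofReal (c * Real.exp (-α * t)) * volume Q := by
  have hlog2 : (0:ℝ) < Real.log 2 := Real.log_pos (by norm_num)
  refine ⟨8, by norm_num, Real.log 2 / 6, by positivity, ?_⟩
  intro Q f m hQ hf hBex hsupp hmed t ht
  obtain ⟨B, hB⟩ := hBex
  set α := Real.log 2 / 6 with hα
  rcases Nat.eq_zero_or_pos n with hn | hn
  · -- degenerate dimension 0
    subst hn
    have hsub : ∀ x y : En 0, x = y := fun x y => PiLp.ext fun i => i.elim0
    obtain ⟨A, hh0, hhpos, rfl⟩ := hQ
    have hQvol : volume {x : En 0 | ∀ i, A i ≤ x i ∧ x i ≤ A i + hh0} =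
        ENNReal.ofReal (hh0 ^ 0) := JS.volume_boxC A hhpos.le
    have hemp : {x ∈ {x : En 0 | ∀ i, A i ≤ x i ∧ x i ≤ A i + hh0} |
        t * localSharp (1 / 2 ^ (0 + 2)) {x : En 0 | ∀ i, A i ≤ x i ∧ x i ≤ A i + hh0} f x <
          |f x - m|} = ∅ := by
      ext x
      simp only [Set.mem_setOf_eq, Set.mem_empty_iff_false, iff_false, not_and]
      intro hxQ hlt
      have hls : 0 ≤ localSharp (1 / 2 ^ (0 + 2))
          {x : En 0 | ∀ i, A i ≤ x i ∧ x i ≤ A i + hh0} f x := JS.localSharp_nonneg _ _ _ _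
      have habs : 0 < |f x - m| := lt_of_le_of_lt (by positivity) hlt
      have hne : f x ≠ m := fun hc => by simp [hc] at habs
      rcases lt_or_gt_of_ne hne with hfm | hfm
      · -- f x < m : the set {y ∈ Q | f y < m} is all of Q
        have hone : volume {y ∈ {x : En 0 | ∀ i, A i ≤ x i ∧ x i ≤ A i + hh0} | f y < m} =
            volume {x : En 0 | ∀ i, A i ≤ x i ∧ x i ≤ A i + hh0} := by
          congr 1
          ext y
          simp only [Set.mem_setOf_eq]
          constructor
          · exact fun hy => hy.1
          · intro hy
            exact ⟨hy, by rw [hsub y x]; exact hfm⟩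
        have := hmed.2
        rw [hone, hQvol] at this
        simp only [pow_zero, ENNReal.ofReal_one] at this
        norm_num at this
      · have hone : volume {y ∈ {x : En 0 | ∀ i, A i ≤ x i ∧ x i ≤ A i + hh0} | m < f y} =
            volume {x : En 0 | ∀ i, A i ≤ x i ∧ x i ≤ A i + hh0} := by
          congr 1
          ext y
          simp only [Set.mem_setOf_eq]
          constructor
          · exact fun hy => hy.1
          · intro hy
            exact ⟨hy, by rw [hsub y x]; exact hfm⟩
        have := hmed.1
        rw [hone, hQvol] at this
        simp only [pow_zero, ENNReal.ofReal_one] at this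
        norm_num at this
    rw [hemp]
    simp
  · -- main case n ≥ 1
    obtain ⟨A, hside, hhpos, rfl⟩ := hQ
    -- identify Q with boxC
    have hQC : {x : En n | ∀ i, A i ≤ x i ∧ x i ≤ A i + hside} = JS.boxC A hside := rfl
    rw [hQC] at hmed ⊢
    set lam : ℝ := 1 / 2 ^ (n + 2) with hlam
    have hlam0 : 0 < lam := by rw [hlam]; positivity
    set M : En n → ℝ := localSharp lam (JS.boxC A hside) f with hM
    set μ₀ := JS.medOn f (JS.djO A hside 0 (fun _ => 0)) with hμ₀
    have hdjeq : JS.djO A hside 0 (fun _ => 0) = JS.boxO A hside := JS.djO_zero A hside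
    have hInR0 : JS.InR 0 (fun _ : Fin n => (0:ℤ)) := fun i => by norm_num
    -- half measure fact at generation 0
    have hhalf0 : ∀ (A' : Set (En n)), A' = JS.boxO A hside ∨ A' = JS.boxC A hside →
        ENNReal.ofReal lam * volume (JS.boxC A hside) < volume A' / 2 := by
      intro A' hA'
      have hvol : volume A' = ENNReal.ofReal (hside^n) := by
        rcases hA' with rfl | rfl
        · exact JS.volume_boxO A hhpos.le
        · exact JS.volume_boxC A hhpos.le
      rw [hvol, JS.volume_boxC A hhpos.le]
      have ht0 : (0:ℝ) < hside^n := by positivity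
      have hlam4 : lam ≤ 1/4 := by
        rw [hlam, div_le_div_iff₀ (by positivity) (by norm_num)]
        have : (2:ℝ)^2 ≤ 2^(n+2) := pow_le_pow_right₀ one_le_two (by omega)
        nlinarith
      calc ENNReal.ofReal lam * ENNReal.ofReal (hside^n)
          = ENNReal.ofReal (lam * hside^n) := (ENNReal.ofReal_mul hlam0.le).symm
        _ < ENNReal.ofReal (hside^n/2) := by
            rw [ENNReal.ofReal_lt_ofReal_iff (by positivity)]
            nlinarith
        _ = ENNReal.ofReal (hside^n) / 2 := by
            rw [ENNReal.ofReal_div_of_pos (by norm_num)]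
            norm_num
    -- medians close
    set w₀ := oscW lam f (JS.boxC A hside) with hw₀
    have hdrift0 : |m - μ₀| ≤ 2 * w₀ := by
      refine JS.med_drift hf hB (JS.measurableSet_boxC A hside)
        (by rw [JS.volume_boxC A hhpos.le]; exact ENNReal.ofReal_ne_top) hmed
        (subset_refl _)
        (JS.measurableSet_boxO A hside)
        (by rw [JS.volume_boxO A hhpos.le]; exact ENNReal.ofReal_ne_top)
        (by rw [hμ₀, hdjeq]
            exact JS.isMedianOn_medOn hf hB (JS.measurableSet_boxO A hside)
              (JS.volume_boxO_pos A hhpos) (JS.volume_boxO_ne_top A hhpos.le))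
        (JS.boxO_subset_boxC A hside)
        (hhalf0 _ (Or.inr rfl)) (hhalf0 _ (Or.inl rfl))
    have hw₀M : ∀ x ∈ JS.boxC A hside, w₀ ≤ M x := fun x hx =>
      JS.oscW_le_localSharp hB (JS.isCube_boxC A hhpos) hx (subset_refl _)
    have hM0 : ∀ x, 0 ≤ M x := fun x => JS.localSharp_nonneg _ _ _ _
    have hQvol : volume (JS.boxC A hside) = ENNReal.ofReal (hside^n) :=
      JS.volume_boxC A hhpos.le
    have hOvol : volume (JS.boxO A hside) = ENNReal.ofReal (hside^n) :=
      JS.volume_boxO A hhpos.le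
    have hdiffnull : volume (JS.boxC A hside \ JS.boxO A hside) = 0 := by
      rw [measure_diff (JS.boxO_subset_boxC A hside)
        (JS.measurableSet_boxO A hside).nullMeasurableSet
        (by rw [hOvol]; exact ENNReal.ofReal_ne_top), hQvol, hOvol, tsub_self]
    -- main dichotomy on t
    rcases le_or_gt t 2 with htle | htgt
    · -- trivial bound
      have h1le : (1:ℝ≥0∞) ≤ ENNReal.ofReal (8 * Real.exp (-α * t)) := by
        rw [show (1:ℝ≥0∞) = ENNReal.ofReal 1 by simp]
        apply ENNReal.ofReal_le_ofReal
        have h8 : Real.exp (-(3 * Real.log 2)) = 1/8 := by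
          rw [Real.exp_neg, show (3:ℝ) * Real.log 2 = Real.log (2^(3:ℕ)) by
            rw [Real.log_pow]; push_cast; ring]
          rw [Real.exp_log (by norm_num)]
          norm_num
        have hmono : Real.exp (-(3 * Real.log 2)) ≤ Real.exp (-α * t) := by
          apply Real.exp_le_exp.mpr
          rw [hα]
          nlinarith
        rw [h8] at hmono
        linarith
      calc volume {x ∈ JS.boxC A hside | t * M x < |f x - m|}
          ≤ volume (JS.boxC A hside) := measure_mono (Set.sep_subset _ _)
        _ = 1 * volume (JS.boxC A hside) := (one_mul _).symm
        _ ≤ ENNReal.ofReal (8 * Real.exp (-α * t)) * volume (JS.boxC A hside) :=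
            mul_le_mul_left h1le _
    · -- exponential decay via the main claim
      set k := ⌊(t-2)/6⌋₊ with hk
      have hk_le : 6*(k:ℝ) ≤ t - 2 := by
        have := Nat.floor_le (show (0:ℝ) ≤ (t-2)/6 by linarith)
        linarith
      have hk_ge : t - 2 < 6*((k:ℝ)+1) := by
        have := Nat.lt_floor_add_one ((t-2)/6)
        linarith
      have hclaim := JS.main_claim (a := A) (h := hside) hhpos hn hf hB k 0
        (fun _ => 0) hInR0
      have hsubset : {x ∈ JS.boxC A hside | t * M x < |f x - m|} ⊆
          (JS.boxC A hside \ JS.boxO A hside) ∪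
          {x ∈ JS.djO A hside 0 (fun _ => 0) |
            6*(k:ℝ) * M x < |f x - JS.medOn f (JS.djO A hside 0 (fun _ => 0))|} := by
        intro x hx
        obtain ⟨hx1, hx2⟩ := hx
        by_cases hxO : x ∈ JS.boxO A hside
        · right
          refine ⟨by rw [hdjeq]; exact hxO, ?_⟩
          have h1 := abs_sub_le (f x) μ₀ m
          have h1' : |μ₀ - m| = |m - μ₀| := abs_sub_comm _ _
          have h2 : w₀ ≤ M x := hw₀M x hx1
          have h3 := hM0 x
          rw [← hμ₀]
          nlinarith [hx2, hdrift0, h2, h3, hk_le, h1, h1']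
        · exact Or.inl ⟨hx1, hxO⟩
      have hpowle : (2⁻¹:ℝ≥0∞)^k ≤ ENNReal.ofReal (8 * Real.exp (-α * t)) := by
        have hhalfpow : (2⁻¹:ℝ≥0∞)^k = ENNReal.ofReal ((1/2)^k) := by
          rw [ENNReal.ofReal_pow (by norm_num)]
          congr 1
          rw [ENNReal.ofReal_div_of_pos (by norm_num)]
          norm_num
        rw [hhalfpow]
        apply ENNReal.ofReal_le_ofReal
        -- (1/2)^k ≤ 8 * exp (-α t)
        have hexpk : ((1:ℝ)/2)^k = Real.exp (-(k * Real.log 2)) := by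
          rw [← Real.exp_log (show (0:ℝ) < (1/2)^k by positivity)]
          congr 1
          rw [Real.log_pow]
          rw [Real.log_div one_ne_zero (by norm_num), Real.log_one]
          ring
        have harg : -α * t ≥ -(k * Real.log 2) - (4/3) * Real.log 2 := by
          have : α * t < (Real.log 2 / 6) * (6*k + 8) := by
            rw [hα]
            apply mul_lt_mul_of_pos_left _ (by positivity)
            linarith
          have heq : (Real.log 2 / 6) * (6*(k:ℝ) + 8) =
              (k:ℝ) * Real.log 2 + (4/3) * Real.log 2 := by ring
          nlinarith
        have hexp_mono := Real.exp_le_exp.mpr harg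
        rw [hexpk]
        have h83 : Real.exp ((4/3) * Real.log 2) ≤ 8 := by
          have : (4/3 : ℝ) * Real.log 2 ≤ 3 * Real.log 2 := by nlinarith
          calc Real.exp ((4/3) * Real.log 2) ≤ Real.exp (3 * Real.log 2) :=
                Real.exp_le_exp.mpr this
            _ = 8 := by
                rw [show (3:ℝ) * Real.log 2 = Real.log (2^(3:ℕ)) by
                  rw [Real.log_pow]; push_cast; ring]
                rw [Real.exp_log (by norm_num)]
                norm_num
        calc Real.exp (-(k * Real.log 2))
            = Real.exp (-(k * Real.log 2) - (4/3)*Real.log 2) *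
                Real.exp ((4/3)*Real.log 2) := by
              rw [← Real.exp_add]
              congr 1
              ring
          _ ≤ Real.exp (-α * t) * 8 :=
              mul_le_mul hexp_mono h83 (Real.exp_pos _).le (Real.exp_pos _).le
          _ = 8 * Real.exp (-α * t) := by ring
      calc volume {x ∈ JS.boxC A hside | t * M x < |f x - m|}
          ≤ volume (JS.boxC A hside \ JS.boxO A hside) +
            volume {x ∈ JS.djO A hside 0 (fun _ => 0) |
              6*(k:ℝ) * M x < |f x - JS.medOn f (JS.djO A hside 0 (fun _ => 0))|} :=
            le_trans (measure_mono hsubset) (measure_union_le _ _)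
        _ ≤ 0 + (2⁻¹:ℝ≥0∞)^k * volume (JS.djO A hside 0 (fun _ => 0)) := by
            rw [hdiffnull]
            exact add_le_add_right hclaim 0
        _ = (2⁻¹:ℝ≥0∞)^k * volume (JS.boxC A hside) := by
            rw [zero_add, hdjeq, hOvol, hQvol]
        _ ≤ ENNReal.ofReal (8 * Real.exp (-α * t)) * volume (JS.boxC A hside) :=
            mul_le_mul_left hpowle _

end
end

section
/- Let μ⃗ = (μ₁,…,μ_m) be a vector of m positive Borel measures on ℝⁿ such that 𝓜(μ⃗)(x) < ∞ for almost every x ∈ ℝⁿ, where 𝓜(μ⃗)(x) = sup_{Q∋x} ∏_{i=1}^m μ_i(Q)/|Q|. Then for every 0 < δ < 1/m the function (𝓜(μ⃗))^δ is an A₁ weight, and moreover [(𝓜(μ⃗))^δ]_{A₁} ≤ c_n/(1 − mδ) for some dimensional constant c_n. -/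
open MeasureTheory ENNReal Set Function

noncomputable section

namespace CR


variable {n : ℕ}

def pt {n : ℕ} (f : Fin n → ℝ) : En n := (WithLp.equiv 2 (Fin n → ℝ)).symm f

@[simp] lemma pt_apply (f : Fin n → ℝ) (i : Fin n) : pt f i = f i := rfl

def cubeSet {n : ℕ} (a : En n) (h : ℝ) : Set (En n) :=
  {x : En n | ∀ i, a i ≤ x i ∧ x i ≤ a i + h}

lemma isCube_cubeSet (a : En n) {h : ℝ} (hh : 0 < h) : IsCube (cubeSet a h) := ⟨a, h, hh, rfl⟩

lemma isCube_iff {Q : Set (En n)} : IsCube Q ↔ ∃ a h, 0 < h ∧ Q = cubeSet a h := Iff.rfl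

lemma mem_cubeSet {a : En n} {h : ℝ} {x : En n} :
    x ∈ cubeSet a h ↔ ∀ i, a i ≤ x i ∧ x i ≤ a i + h := Iff.rfl

lemma cubeSet_eq_preimage (a : En n) (h : ℝ) :
    cubeSet a h = (MeasurableEquiv.toLp 2 (Fin n → ℝ)).symm ⁻¹'
      (Set.univ.pi fun i => Set.Icc (a i) (a i + h)) := by
  ext x
  constructor
  · intro H i _
    exact ⟨(H i).1, (H i).2⟩
  · intro H i
    exact (H i trivial : x i ∈ Set.Icc (a i) (a i + h))

lemma volume_cubeSet (a : En n) {h : ℝ} (hh : 0 ≤ h) :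
    volume (cubeSet a h) = ENNReal.ofReal h ^ n := by
  rw [cubeSet_eq_preimage,
    (EuclideanSpace.volume_preserving_symm_measurableEquiv_toLp (Fin n)).measure_preimage
      ((MeasurableSet.univ_pi fun i => measurableSet_Icc).nullMeasurableSet)]
  rw [volume_pi_pi]
  simp [Real.volume_Icc]

lemma measurableSet_cubeSet (a : En n) (h : ℝ) : MeasurableSet (cubeSet a h) := by
  rw [cubeSet_eq_preimage]
  exact (MeasurableEquiv.toLp 2 (Fin n → ℝ)).symm.measurable
    (MeasurableSet.univ_pi fun i => measurableSet_Icc)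

lemma measurableSet_of_isCube {Q : Set (En n)} (hQ : IsCube Q) : MeasurableSet Q := by
  obtain ⟨a, h, hh, rfl⟩ := hQ; exact measurableSet_cubeSet a h

lemma volume_cubeSet_pos {a : En n} {h : ℝ} (hh : 0 < h) : 0 < volume (cubeSet a h) := by
  rw [volume_cubeSet a hh.le]
  have : ENNReal.ofReal h ≠ 0 := by simpa using hh
  simpa [pos_iff_ne_zero] using pow_ne_zero n this

lemma volume_cubeSet_lt_top (a : En n) (h : ℝ) : volume (cubeSet a h) < ⊤ := by
  rcases le_or_gt h 0 with h0 | h0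
  · refine lt_of_le_of_lt (measure_mono (show cubeSet a h ⊆ {a} from ?_))
      isCompact_singleton.measure_lt_top
    intro x hx
    have hxa : ∀ i, x i = a i := fun i =>
      le_antisymm ((hx i).2.trans (by linarith)) (hx i).1
    have : x = a := by ext i; exact hxa i
    simp [this]
  · rw [volume_cubeSet a h0.le]
    exact pow_lt_top ofReal_lt_top

lemma cubeSet_nonempty (a : En n) {h : ℝ} (hh : 0 ≤ h) : (cubeSet a h).Nonempty :=
  ⟨a, fun i => ⟨le_rfl, by linarith⟩⟩

lemma interior_nonempty {a : En n} {h : ℝ} (hh : 0 < h) :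
    (interior (cubeSet a h)).Nonempty := by
  have hsub : {x : En n | ∀ i, a i < x i ∧ x i < a i + h} ⊆ cubeSet a h :=
    fun x hx i => ⟨(hx i).1.le, (hx i).2.le⟩
  have hopen : IsOpen {x : En n | ∀ i, a i < x i ∧ x i < a i + h} := by
    have : {x : En n | ∀ i, a i < x i ∧ x i < a i + h} =
        ⋂ i, ((EuclideanSpace.proj (𝕜 := ℝ) i) ⁻¹' Set.Ioo (a i) (a i + h)) := by
      ext x; simp [forall_and]
    rw [this]
    exact isOpen_iInter_of_finite fun i =>
      (isOpen_Ioo).preimage (EuclideanSpace.proj i).continuous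
  have hne : (pt fun i => a i + h / 2) ∈ {x : En n | ∀ i, a i < x i ∧ x i < a i + h} := by
    intro i; simp only [pt_apply]; constructor <;> linarith
  exact ⟨_, interior_maximal hsub hopen hne⟩

variable {m : ℕ} (μ : Fin m → Measure (En n))

lemma le_multiMaxMeas {Q : Set (En n)} {x : En n} (hQ : IsCube Q) (hx : x ∈ Q) :
    (∏ i, μ i Q / volume Q) ≤ multiMaxMeas μ x :=
  le_iSup₂ (f := fun (Q : Set (En n)) (_ : IsCube Q ∧ x ∈ Q) => ∏ i, μ i Q / volume Q) Q ⟨hQ, hx⟩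

lemma prod_div_le_of_subset {R R' : Set (En n)} (hsub : R ⊆ R')
    (hvol : volume R' = (3:ℝ≥0∞) ^ n * volume R) (hR0 : volume R ≠ 0) (hRt : volume R ≠ ⊤) :
    (∏ i, μ i R / volume R) ≤ (3:ℝ≥0∞) ^ (n * m) * ∏ i, μ i R' / volume R' := by
  have key : ∀ i, μ i R / volume R ≤ (3:ℝ≥0∞) ^ n * (μ i R' / volume R') := by
    intro i
    have h1 : (3:ℝ≥0∞) ^ n * (μ i R' / volume R') = μ i R' / volume R := by
      rw [hvol, ENNReal.div_eq_inv_mul, ENNReal.mul_inv (Or.inl (by positivity)) (Or.inl ?_),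
        ENNReal.div_eq_inv_mul, ← mul_assoc, ← mul_assoc]
      · rw [ENNReal.mul_inv_cancel (by positivity) (by simp), one_mul]
      · exact pow_ne_top (by simp)
    rw [h1]
    exact ENNReal.div_le_div_right (measure_mono hsub) _
  calc (∏ i, μ i R / volume R) ≤ ∏ i, (3:ℝ≥0∞) ^ n * (μ i R' / volume R') :=
        Finset.prod_le_prod' fun i _ => key i
    _ = (3:ℝ≥0∞) ^ (n * m) * ∏ i, μ i R' / volume R' := by
        rw [Finset.prod_mul_distrib, Finset.prod_const, Finset.card_univ, Fintype.card_fin,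
          pow_mul]

/-- Big-cube bound: cubes through `y ∈ Q` with side `≥ h` are controlled by `𝓜 μ x₀`. -/
lemma big_cube_bound {a b : En n} {h k : ℝ} (hh : 0 < h) (hk : h ≤ k) {x₀ y : En n}
    (hx₀ : x₀ ∈ cubeSet a h) (hy : y ∈ cubeSet a h) (hyR : y ∈ cubeSet b k) :
    (∏ i, μ i (cubeSet b k) / volume (cubeSet b k)) ≤
      (3:ℝ≥0∞) ^ (n * m) * multiMaxMeas μ x₀ := by
  have hk0 : 0 < k := hh.trans_le hk
  set R' : Set (En n) := cubeSet (pt fun i => b i - k) (3 * k) with hR'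
  have hsub : cubeSet b k ⊆ R' := by
    intro x hx i
    simp only [pt_apply]
    have := hx i
    constructor <;> linarith [this.1, this.2]
  have hx₀R' : x₀ ∈ R' := by
    intro i
    simp only [pt_apply]
    have h1 := hx₀ i; have h2 := hy i; have h3 := hyR i
    constructor <;> linarith [h1.1, h1.2, h2.1, h2.2, h3.1, h3.2]
  have hvol : volume R' = (3:ℝ≥0∞) ^ n * volume (cubeSet b k) := by
    rw [hR', volume_cubeSet _ (by linarith), volume_cubeSet _ hk0.le,
      ENNReal.ofReal_mul (by norm_num), mul_pow]
    norm_num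
  calc (∏ i, μ i (cubeSet b k) / volume (cubeSet b k))
      ≤ (3:ℝ≥0∞) ^ (n * m) * ∏ i, μ i R' / volume R' :=
        prod_div_le_of_subset μ hsub hvol (volume_cubeSet_pos hk0).ne'
          (volume_cubeSet_lt_top _ _).ne
    _ ≤ (3:ℝ≥0∞) ^ (n * m) * multiMaxMeas μ x₀ := by
        gcongr
        exact le_multiMaxMeas μ (isCube_cubeSet _ (by linarith)) hx₀R'

/-- Local maximal function relative to a set `S`. -/
def locMax {n m : ℕ} (μ : Fin m → Measure (En n)) (S : Set (En n)) (y : En n) : ℝ≥0∞ :=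
  ⨆ (R : Set (En n)) (_ : IsCube R ∧ y ∈ R), ∏ i, μ i (R ∩ S) / volume R

lemma small_cube_subset {a b : En n} {h k : ℝ} (hk : k ≤ h) {y : En n}
    (hy : y ∈ cubeSet a h) (hyR : y ∈ cubeSet b k) :
    cubeSet b k ⊆ cubeSet (pt fun i => a i - h) (3 * h) := by
  intro x hx i
  simp only [pt_apply]
  have h1 := hy i; have h2 := hyR i; have h3 := hx i
  constructor <;> linarith [h1.1, h1.2, h2.1, h2.2, h3.1, h3.2]

/-- Pointwise splitting of the multilinear maximal function on a cube. -/
lemma pointwise_split {a : En n} {h : ℝ} (hh : 0 < h) {x₀ y : En n}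
    (hx₀ : x₀ ∈ cubeSet a h) (hy : y ∈ cubeSet a h) :
    multiMaxMeas μ y ≤ (3:ℝ≥0∞) ^ (n * m) * multiMaxMeas μ x₀ +
      locMax μ (cubeSet (pt fun i => a i - h) (3 * h)) y := by
  refine iSup₂_le ?_
  rintro R ⟨⟨b, k, hk0, rfl⟩, hyR⟩
  rcases le_total k h with hkh | hhk
  · refine le_add_left ?_
    have hsub : cubeSet b k ⊆ cubeSet (pt fun i => a i - h) (3 * h) :=
      small_cube_subset hkh hy hyR
    have : cubeSet b k ∩ cubeSet (pt fun i => a i - h) (3 * h) = cubeSet b k :=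
      inter_eq_self_of_subset_left hsub
    refine le_trans (le_of_eq ?_)
      (le_iSup₂ (f := fun (R : Set (En n)) (_ : IsCube R ∧ y ∈ R) =>
        ∏ i, μ i (R ∩ cubeSet (pt fun i => a i - h) (3 * h)) / volume R)
        (cubeSet b k) ⟨isCube_cubeSet _ hk0, hyR⟩)
    rw [this]
    rfl
  · exact le_add_right (big_cube_bound μ hh hhk hx₀ hy hyR)

lemma prod_div_const {c : Fin m → ℝ≥0∞} {v : ℝ≥0∞} :
    (∏ i, c i / v) = (∏ i, c i) / v ^ m := by
  simp [div_eq_mul_inv, Finset.prod_mul_distrib, ← ENNReal.inv_pow]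

lemma pow_rpow_inv_m (hm : 0 < m) (v : ℝ≥0∞) : (v ^ m) ^ ((m:ℝ)⁻¹) = v := by
  rw [← ENNReal.rpow_natCast v m, ← ENNReal.rpow_mul,
    mul_inv_cancel₀ (by exact_mod_cast hm.ne'), ENNReal.rpow_one]

/-- Volume bound for a cube on which the localized product average exceeds `lam`. -/
lemma cube_vol_le (hm : 0 < m) {S : Set (En n)} {lam : ℝ≥0∞} (hlam0 : lam ≠ 0)
    (hlamt : lam ≠ ⊤) {b : En n} {k : ℝ} (hk : 0 < k)
    (hval : lam < ∏ i, μ i (cubeSet b k ∩ S) / volume (cubeSet b k)) :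
    volume (cubeSet b k) ≤ ((∏ i, μ i (cubeSet b k ∩ S)) / lam) ^ ((m:ℝ)⁻¹) := by
  set v := volume (cubeSet b k) with hv
  rw [prod_div_const] at hval
  have h1 : lam * v ^ m < ∏ i, μ i (cubeSet b k ∩ S) := by
    rw [← ENNReal.lt_div_iff_mul_lt (Or.inl (pow_ne_zero m (volume_cubeSet_pos hk).ne'))
      (Or.inl (pow_ne_top (volume_cubeSet_lt_top b k).ne))]
    exact hval
  have h2 : v ^ m ≤ (∏ i, μ i (cubeSet b k ∩ S)) / lam := by
    rw [ENNReal.le_div_iff_mul_le (Or.inl hlam0) (Or.inl hlamt), mul_comm]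
    exact h1.le
  calc v = (v ^ m) ^ ((m:ℝ)⁻¹) := (pow_rpow_inv_m hm v).symm
    _ ≤ _ := ENNReal.rpow_le_rpow h2 (by positivity)

/-- Weak type estimate for the localized multilinear maximal function. -/
lemma weak_type (hn : 0 < n) (hm : 0 < m) {S : Set (En n)} (hS : MeasurableSet S)
    {lam : ℝ≥0∞} (hlam0 : lam ≠ 0) :
    volume {y : En n | lam < locMax μ S y} ≤
      5 ^ n * ((∏ i, μ i S) / lam) ^ ((m:ℝ)⁻¹) := by
  by_cases hlamt : lam = ⊤
  · simp [hlamt]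
  set P := ∏ i, μ i S with hP
  by_cases hPt : P = ⊤
  · rw [hPt, ENNReal.top_div_of_ne_top hlamt, ENNReal.top_rpow_of_pos (by positivity)]
    simp
  set V : ℝ≥0∞ := (P / lam) ^ ((m:ℝ)⁻¹) with hV
  have hVt : V ≠ ⊤ :=
    (ENNReal.rpow_lt_top_of_nonneg (by positivity) (ENNReal.div_lt_top hPt hlam0).ne).ne
  set B : En n × ℝ → Set (En n) := fun p => cubeSet p.1 p.2 with hB
  set t : Set (En n × ℝ) := {p | 0 < p.2 ∧ lam < ∏ i, μ i (B p ∩ S) / volume (B p)} with ht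
  -- each cube in `t` has volume at most `V`
  have hvolV : ∀ p ∈ t, volume (B p) ≤ V := by
    rintro p ⟨hp2, hval⟩
    refine (cube_vol_le μ hm hlam0 hlamt hp2 hval).trans ?_
    exact ENNReal.rpow_le_rpow (ENNReal.div_le_div_right
      (Finset.prod_le_prod' fun i _ => measure_mono inter_subset_right) _) (by positivity)
  have hδle : ∀ p ∈ t, p.2 ≤ max 1 V.toReal := by
    rintro p hpt
    rcases le_or_gt p.2 1 with h1 | h1
    · exact h1.trans (le_max_left _ _)
    · refine le_trans ?_ (le_max_right _ _)
      have h2 : ENNReal.ofReal p.2 ≤ V := by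
        refine le_trans ?_ (hvolV p hpt)
        rw [hB, volume_cubeSet _ (by linarith)]
        exact le_self_pow₀ (by simpa using h1.le) hn.ne'
      have := ENNReal.toReal_mono hVt h2
      rwa [ENNReal.toReal_ofReal (by linarith)] at this
  obtain ⟨u, hut, hdisj, hcov⟩ :=
    Vitali.exists_disjoint_subfamily_covering_enlargement B t (fun p => p.2) 2 one_lt_two
      (fun p hpt => (ht ▸ hpt).1.le) (max 1 V.toReal) hδle
      (fun p hpt => cubeSet_nonempty _ (ht ▸ hpt).1.le)
  have hucount : u.Countable :=
    hdisj.countable_of_nonempty_interior fun p hpu => interior_nonempty (hut hpu).1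
  -- the enlarged cubes cover the super-level set
  set big : En n × ℝ → Set (En n) := fun q => cubeSet (pt fun i => q.1 i - 2 * q.2) (5 * q.2)
    with hbig
  have hsub : {y : En n | lam < locMax μ S y} ⊆ ⋃ q ∈ u, big q := by
    intro y hy
    simp only [mem_setOf_eq, locMax, lt_iSup_iff] at hy
    obtain ⟨R, ⟨⟨b, k, hk0, rfl⟩, hyR⟩, hval⟩ := hy
    have hpt : ((b, k) : En n × ℝ) ∈ t := ⟨hk0, hval⟩
    obtain ⟨q, hqu, hint, hqk⟩ := hcov _ hpt
    obtain ⟨z, hz1, hz2⟩ := hint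
    refine mem_biUnion hqu ?_
    intro i
    simp only [pt_apply]
    have h1 := hyR i
    have h2 := hz1 i
    have h3 := hz2 i
    have hq2 : 0 < q.2 := (hut hqu).1
    constructor <;> linarith [h1.1, h1.2, h2.1, h2.2, h3.1, h3.2, hqk, hq2]
  -- Hoelder argument on the disjoint subfamily
  letI : MeasurableSpace ↥u := ⊤
  haveI : MeasurableSingletonClass ↥u := ⟨fun _ => trivial⟩
  haveI : Countable ↥u := hucount.to_subtype
  have hBdisj : Pairwise (Disjoint on fun q : ↥u => B q.1 ∩ S) := by
    intro q1 q2 hne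
    exact Disjoint.mono inter_subset_left inter_subset_left
      (hdisj q1.2 q2.2 (fun h => hne (Subtype.ext h)))
  have hsum_le : ∀ i, ∑' q : ↥u, μ i (B q.1 ∩ S) ≤ μ i S := by
    intro i
    rw [← measure_iUnion hBdisj fun q => (measurableSet_cubeSet _ _).inter hS]
    exact measure_mono (iUnion_subset fun q => inter_subset_right)
  have holder : ∑' q : ↥u, ∏ i, μ i (B q.1 ∩ S) ^ ((m:ℝ)⁻¹) ≤ P ^ ((m:ℝ)⁻¹) := by
    have h1 := ENNReal.lintegral_prod_norm_pow_le (μ := (Measure.count : Measure ↥u))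
      Finset.univ (f := fun i (q : ↥u) => μ i (B q.1 ∩ S)) (p := fun _ => (m:ℝ)⁻¹)
      (fun i _ => measurable_from_top.aemeasurable)
      (by simp [Finset.sum_const, mul_inv_cancel₀ (show (m:ℝ) ≠ 0 by exact_mod_cast hm.ne')])
      (fun i _ => inv_nonneg.2 (Nat.cast_nonneg m))
    rw [lintegral_count] at h1
    refine h1.trans ?_
    calc ∏ i, (∫⁻ q : ↥u, μ i (B q.1 ∩ S) ∂Measure.count) ^ ((m:ℝ)⁻¹)
        ≤ ∏ i, (μ i S) ^ ((m:ℝ)⁻¹) := by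
          refine Finset.prod_le_prod' fun i _ => ENNReal.rpow_le_rpow ?_ (by positivity)
          rw [lintegral_count]
          exact hsum_le i
      _ = P ^ ((m:ℝ)⁻¹) := by rw [hP, ENNReal.prod_rpow_of_nonneg (inv_nonneg.2 (Nat.cast_nonneg m))]
  -- put everything together
  calc volume {y : En n | lam < locMax μ S y}
      ≤ volume (⋃ q ∈ u, big q) := measure_mono hsub
    _ ≤ ∑' q : ↥u, volume (big q.1) := measure_biUnion_le volume hucount big
    _ = ∑' q : ↥u, 5 ^ n * volume (B q.1) := by
        refine tsum_congr fun q => ?_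
        have hq2 : 0 < q.1.2 := (hut q.2).1
        rw [hbig, hB, volume_cubeSet _ (by linarith), volume_cubeSet _ hq2.le,
          show (5 : ℝ) * q.1.2 = 5 * q.1.2 from rfl, ENNReal.ofReal_mul (by norm_num),
          mul_pow]
        norm_num
    _ = 5 ^ n * ∑' q : ↥u, volume (B q.1) := ENNReal.tsum_mul_left
    _ ≤ 5 ^ n * ∑' q : ↥u, (∏ i, μ i (B q.1 ∩ S) ^ ((m:ℝ)⁻¹)) / lam ^ ((m:ℝ)⁻¹) := by
        gcongr with q
        refine le_trans (cube_vol_le μ hm hlam0 hlamt (hut q.2).1 (hut q.2).2) ?_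
        rw [ENNReal.div_rpow_of_nonneg _ _ (by positivity),
          ENNReal.prod_rpow_of_nonneg (show (0:ℝ) ≤ (m:ℝ)⁻¹ by positivity)]
    _ = 5 ^ n * ((∑' q : ↥u, ∏ i, μ i (B q.1 ∩ S) ^ ((m:ℝ)⁻¹)) / lam ^ ((m:ℝ)⁻¹)) := by
        simp_rw [div_eq_mul_inv]
        rw [ENNReal.tsum_mul_right]
    _ ≤ 5 ^ n * (P ^ ((m:ℝ)⁻¹) / lam ^ ((m:ℝ)⁻¹)) :=
        mul_le_mul_right (ENNReal.div_le_div_right holder _) _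
    _ = 5 ^ n * (P / lam) ^ ((m:ℝ)⁻¹) := by
        rw [ENNReal.div_rpow_of_nonneg _ _ (by positivity)]
lemma pow_rpow_comm (x : ℝ≥0∞) (k : ℕ) (r : ℝ) : (x ^ k) ^ r = (x ^ r) ^ k := by
  rw [← ENNReal.rpow_natCast x k, ← ENNReal.rpow_mul, mul_comm, ENNReal.rpow_mul,
    ENNReal.rpow_natCast]

lemma two_rpow_inv_le {m : ℕ} (hm : 0 < m) : (2:ℝ) ^ ((m:ℝ)⁻¹) ≤ 1 + 2 / m := by
  have hm0 : (m:ℝ) ≠ 0 := by exact_mod_cast hm.ne'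
  have hmpos : (0:ℝ) < m := by exact_mod_cast hm
  refine le_of_pow_le_pow_left₀ hm.ne' (by positivity) ?_
  have h1 : ((2:ℝ) ^ ((m:ℝ)⁻¹)) ^ (m:ℕ) = 2 := by
    rw [← Real.rpow_natCast ((2:ℝ) ^ ((m:ℝ)⁻¹)) m, ← Real.rpow_mul (by norm_num),
      inv_mul_cancel₀ hm0, Real.rpow_one]
  have h2 : 1 + (m:ℝ) * (2 / m) ≤ (1 + 2 / m) ^ (m:ℕ) :=
    one_add_mul_le_pow (le_trans (by norm_num : (-2:ℝ) ≤ 0) (by positivity)) m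
  have h3 : (m:ℝ) * (2 / m) = 2 := by field_simp
  rw [h1]
  calc (2:ℝ) ≤ 1 + (m:ℝ) * (2 / m) := by rw [h3]; norm_num
    _ ≤ _ := h2

/-- `2^δ - 1 ≤ ofReal (2/m)` in `ℝ≥0∞`, for `δ ≤ 1/m`. -/
lemma c1_le {m : ℕ} (hm : 0 < m) {δ : ℝ} (hδm : δ ≤ 1 / (m:ℝ)) :
    (2:ℝ≥0∞) ^ δ - 1 ≤ ENNReal.ofReal (2 / m) := by
  have h1 : (2:ℝ≥0∞) ^ δ ≤ ENNReal.ofReal (1 + 2 / m) := by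
    calc (2:ℝ≥0∞) ^ δ ≤ (2:ℝ≥0∞) ^ ((m:ℝ)⁻¹) :=
          ENNReal.rpow_le_rpow_of_exponent_le (by norm_num) (by rwa [one_div] at hδm)
      _ = ENNReal.ofReal ((2:ℝ) ^ ((m:ℝ)⁻¹)) := by
          rw [show ((2:ℝ≥0∞)) = ENNReal.ofReal (2:ℝ) by norm_num,
            ENNReal.ofReal_rpow_of_pos (by norm_num)]
      _ ≤ ENNReal.ofReal (1 + 2 / m) := ENNReal.ofReal_le_ofReal (two_rpow_inv_le hm)
  calc (2:ℝ≥0∞) ^ δ - 1 ≤ ENNReal.ofReal (1 + 2 / m) - ENNReal.ofReal 1 := by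
        gcongr
        simp
    _ = ENNReal.ofReal (1 + 2 / m - 1) := (ENNReal.ofReal_sub _ (by norm_num)).symm
    _ = ENNReal.ofReal (2 / m) := by norm_num

lemma one_sub_two_rpow_neg {t : ℝ} (ht0 : 0 < t) (ht1 : t ≤ 1) :
    (1 - (2:ℝ≥0∞) ^ (-t))⁻¹ ≤ ENNReal.ofReal (4 / t) := by
  have hlog : (1:ℝ)/2 ≤ Real.log 2 := by
    have := Real.log_two_gt_d9
    linarith
  have hexp : 1 + t / 2 ≤ (2:ℝ) ^ t := by
    rw [Real.rpow_def_of_pos (by norm_num : (0:ℝ) < 2)]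
    have hmul : (1/2) * t ≤ Real.log 2 * t := mul_le_mul_of_nonneg_right hlog ht0.le
    calc 1 + t / 2 ≤ Real.log 2 * t + 1 := by linarith
      _ ≤ Real.exp (Real.log 2 * t) := Real.add_one_le_exp _
  have hpos : (0:ℝ) < 1 + t / 2 := by linarith
  have hinv : ((1:ℝ) + t / 2)⁻¹ ≤ 1 - t / 4 := by
    rw [← one_div, div_le_iff₀ hpos]
    nlinarith
  have hreal : (2:ℝ) ^ (-t) ≤ 1 - t / 4 := by
    calc (2:ℝ) ^ (-t) = ((2:ℝ) ^ t)⁻¹ := by rw [Real.rpow_neg (by norm_num)]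
      _ ≤ ((1:ℝ) + t / 2)⁻¹ := inv_anti₀ hpos hexp
      _ ≤ 1 - t / 4 := hinv
  have hE : (2:ℝ≥0∞) ^ (-t) ≤ ENNReal.ofReal (1 - t / 4) := by
    rw [show ((2:ℝ≥0∞)) = ENNReal.ofReal (2:ℝ) by norm_num,
      ENNReal.ofReal_rpow_of_pos (by norm_num)]
    exact ENNReal.ofReal_le_ofReal hreal
  have hsub : ENNReal.ofReal (t / 4) ≤ 1 - (2:ℝ≥0∞) ^ (-t) := by
    calc ENNReal.ofReal (t / 4) = ENNReal.ofReal 1 - ENNReal.ofReal (1 - t / 4) := by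
          rw [← ENNReal.ofReal_sub _ (by linarith)]
          norm_num
      _ ≤ 1 - (2:ℝ≥0∞) ^ (-t) := by
          rw [ENNReal.ofReal_one]
          exact tsub_le_tsub_left hE 1
  calc (1 - (2:ℝ≥0∞) ^ (-t))⁻¹ ≤ (ENNReal.ofReal (t / 4))⁻¹ := ENNReal.inv_le_inv' hsub
    _ = ENNReal.ofReal ((t / 4)⁻¹) := by
        rw [← ENNReal.ofReal_inv_of_pos (by linarith)]
    _ = ENNReal.ofReal (4 / t) := by
        congr 1
        field_simp

/-- Geometric series bound. -/
lemma geom_le {m : ℕ} (hm : 0 < m) {δ : ℝ} (hδ0 : 0 ≤ δ) (hδm : δ < 1 / (m:ℝ)) :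
    (1 - (2:ℝ≥0∞) ^ (δ - (m:ℝ)⁻¹))⁻¹ ≤ ENNReal.ofReal (4 * m / (1 - m * δ)) := by
  have hmpos : (0:ℝ) < m := by exact_mod_cast hm
  have ht0 : 0 < (m:ℝ)⁻¹ - δ := by rw [one_div] at hδm; linarith
  have ht1 : (m:ℝ)⁻¹ - δ ≤ 1 := by
    have h1 : (m:ℝ)⁻¹ ≤ 1 := by
      rw [inv_le_one_iff₀]
      right
      exact_mod_cast hm
    linarith
  have := one_sub_two_rpow_neg ht0 ht1
  rw [show -((m:ℝ)⁻¹ - δ) = δ - (m:ℝ)⁻¹ by ring] at this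
  refine this.trans (le_of_eq ?_)
  congr 1
  have hm0 : (m:ℝ) ≠ 0 := hmpos.ne'
  have h4 : (m:ℝ) * δ < 1 := by
    have := mul_lt_mul_of_pos_left hδm hmpos
    rwa [mul_one_div, div_self hm0] at this
  rw [_root_.div_eq_div_iff ht0.ne' (by linarith : (1:ℝ) - m * δ ≠ 0)]
  field_simp
/-- Kolmogorov-type estimate for the localized maximal function on a cube. -/
lemma kolmogorov (hn : 0 < n) (hm : 0 < m) {δ : ℝ} (hδ : 0 < δ) (hδm : δ < 1 / (m:ℝ))
    {S : Set (En n)} (hS : MeasurableSet S) (a : En n) (h : ℝ)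
    {A : ℝ≥0∞} (hA0 : A ≠ 0) (hAt : A ≠ ⊤)
    (hPA : (∏ i, μ i S) ≤ A * volume (cubeSet a h) ^ m) :
    ∫⁻ y in cubeSet a h, locMax μ S y ^ δ ≤
      A ^ δ * volume (cubeSet a h) * (1 + 5 ^ n * ENNReal.ofReal (8 / (1 - m * δ))) := by
  set Q := cubeSet a h with hQdef
  set G := locMax μ S with hGdef
  set P := ∏ i, μ i S with hPdef
  have hvQt : volume Q ≠ ⊤ := (volume_cubeSet_lt_top a h).ne
  have hPt : P ≠ ⊤ := by
    refine ne_top_of_le_ne_top ?_ hPA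
    exact ENNReal.mul_ne_top hAt (pow_ne_top hvQt)
  have hPAd : P / A ≤ volume Q ^ m := by
    rw [ENNReal.div_le_iff_le_mul (Or.inl hA0) (Or.inl hAt), mul_comm]
    exact hPA
  have hPAm : (P / A) ^ ((m:ℝ)⁻¹) ≤ volume Q := by
    calc (P / A) ^ ((m:ℝ)⁻¹) ≤ (volume Q ^ m) ^ ((m:ℝ)⁻¹) :=
          ENNReal.rpow_le_rpow hPAd (by positivity)
      _ = volume Q := pow_rpow_inv_m hm _
  set c₁ : ℝ≥0∞ := (2:ℝ≥0∞) ^ δ - 1 with hc₁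
  have h2δ : (1:ℝ≥0∞) ≤ (2:ℝ≥0∞) ^ δ := by
    calc (1:ℝ≥0∞) = (2:ℝ≥0∞) ^ (0:ℝ) := by rw [ENNReal.rpow_zero]
      _ ≤ (2:ℝ≥0∞) ^ δ := ENNReal.rpow_le_rpow_of_exponent_le (by norm_num) hδ.le
  -- levels and their superlevel sets
  set T : ℕ → Set (En n) := fun k => toMeasurable volume {y | (2:ℝ≥0∞) ^ k * A < G y} with hT
  -- telescoping identity
  have telescope : ∀ K : ℕ,
      A ^ δ + ∑ k ∈ Finset.range K, ((2:ℝ≥0∞) ^ k * A) ^ δ * c₁ = ((2:ℝ≥0∞) ^ K * A) ^ δ := by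
    intro K
    induction K with
    | zero => simp
    | succ K ih =>
      rw [Finset.sum_range_succ, ← add_assoc, ih]
      have : ((2:ℝ≥0∞) ^ (K+1) * A) ^ δ = ((2:ℝ≥0∞) ^ K * A) ^ δ * (2:ℝ≥0∞) ^ δ := by
        rw [pow_succ, mul_comm ((2:ℝ≥0∞) ^ K) 2, mul_assoc,
          ENNReal.mul_rpow_of_nonneg _ _ hδ.le]
        exact mul_comm _ _
      rw [this]
      calc ((2:ℝ≥0∞) ^ K * A) ^ δ + ((2:ℝ≥0∞) ^ K * A) ^ δ * c₁
          = ((2:ℝ≥0∞) ^ K * A) ^ δ * (1 + c₁) := by rw [mul_add, mul_one]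
        _ = ((2:ℝ≥0∞) ^ K * A) ^ δ * (2:ℝ≥0∞) ^ δ := by rw [hc₁, add_tsub_cancel_of_le h2δ]
  -- superlevel sets of `G` have controlled measure
  have hTvol : ∀ k : ℕ, volume (T k) ≤ 5 ^ n * ((P / A) ^ ((m:ℝ)⁻¹) *
      (((2:ℝ≥0∞) ^ ((m:ℝ)⁻¹))⁻¹) ^ k) := by
    intro k
    have hlamne : (2:ℝ≥0∞) ^ k * A ≠ 0 :=
      mul_ne_zero (pow_ne_zero k (by norm_num)) hA0
    have h1 : volume (T k) = volume {y | (2:ℝ≥0∞) ^ k * A < G y} :=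
      measure_toMeasurable _
    have h2 := weak_type μ hn hm hS hlamne
    have h3 : P / ((2:ℝ≥0∞) ^ k * A) = P / A * ((2:ℝ≥0∞) ^ k)⁻¹ := by
      rw [div_eq_mul_inv, ENNReal.mul_inv (Or.inl (pow_ne_zero k (by norm_num)))
        (Or.inl (pow_ne_top (by norm_num))), div_eq_mul_inv, mul_comm (((2:ℝ≥0∞) ^ k)⁻¹) A⁻¹,
        mul_assoc]
    have h4 : (P / ((2:ℝ≥0∞) ^ k * A)) ^ ((m:ℝ)⁻¹) =
        (P / A) ^ ((m:ℝ)⁻¹) * (((2:ℝ≥0∞) ^ ((m:ℝ)⁻¹))⁻¹) ^ k := by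
      rw [h3, ENNReal.mul_rpow_of_nonneg _ _ (by positivity), ENNReal.inv_rpow,
        pow_rpow_comm, ← ENNReal.inv_pow]
    rw [h1, ← h4]
    exact h2
  -- the set where `G = ⊤` is null
  have hC0t : (5:ℝ≥0∞) ^ n * (P / A) ^ ((m:ℝ)⁻¹) ≠ ⊤ :=
    ENNReal.mul_ne_top (pow_ne_top (by norm_num))
      (ENNReal.rpow_lt_top_of_nonneg (by positivity) (ENNReal.div_lt_top hPt hA0).ne).ne
  have hρlt : ((2:ℝ≥0∞) ^ ((m:ℝ)⁻¹))⁻¹ < 1 := by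
    have h1 : (1:ℝ≥0∞) < (2:ℝ≥0∞) ^ ((m:ℝ)⁻¹) := by
      calc (1:ℝ≥0∞) = (2:ℝ≥0∞) ^ (0:ℝ) := by rw [ENNReal.rpow_zero]
        _ < (2:ℝ≥0∞) ^ ((m:ℝ)⁻¹) := by
            have hminv : (0:ℝ) < (m:ℝ)⁻¹ := by
              have : (0:ℝ) < m := by exact_mod_cast hm
              positivity
            exact ENNReal.rpow_lt_rpow_of_exponent_lt one_lt_two ENNReal.ofNat_ne_top hminv
    exact ENNReal.inv_lt_one.mpr h1
  have hnull : volume {y | G y = ⊤} = 0 := by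
    have hbound : ∀ j : ℕ, volume {y | G y = ⊤} ≤
        (5 ^ n * (P / A) ^ ((m:ℝ)⁻¹)) * (((2:ℝ≥0∞) ^ ((m:ℝ)⁻¹))⁻¹) ^ j := by
      intro j
      have hsub : {y | G y = ⊤} ⊆ T j := by
        refine subset_trans ?_ (subset_toMeasurable _ _)
        intro y hy
        have hy' : G y = ⊤ := hy
        have hne : (2:ℝ≥0∞) ^ j * A ≠ ⊤ := ENNReal.mul_ne_top (pow_ne_top (by norm_num)) hAt
        show (2:ℝ≥0∞) ^ j * A < G y
        rw [hy']
        exact hne.lt_top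
      calc volume {y | G y = ⊤} ≤ volume (T j) := measure_mono hsub
        _ ≤ _ := (hTvol j).trans (le_of_eq (by ring))
    have htend : Filter.Tendsto
        (fun j : ℕ => (5 ^ n * (P / A) ^ ((m:ℝ)⁻¹)) * (((2:ℝ≥0∞) ^ ((m:ℝ)⁻¹))⁻¹) ^ j)
        Filter.atTop (nhds 0) := by
      have h1 := ENNReal.Tendsto.const_mul
        (ENNReal.tendsto_pow_atTop_nhds_zero_of_lt_one hρlt)
        (Or.inr hC0t)
      simpa using h1
    have := ge_of_tendsto' htend hbound
    exact le_antisymm this (zero_le)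
  -- pointwise layer-cake bound
  have hpoint : ∀ y : En n, G y ≠ ⊤ → G y ^ δ ≤
      A ^ δ + ∑' k : ℕ, ((2:ℝ≥0∞) ^ k * A) ^ δ * c₁ * (T k).indicator 1 y := by
    intro y hyt
    rcases le_or_gt (G y) A with hle | hlt
    · exact le_trans (ENNReal.rpow_le_rpow hle hδ.le) le_self_add
    · have hex : ∃ K : ℕ, G y ≤ (2:ℝ≥0∞) ^ K * A := by
        obtain ⟨N, hN⟩ := ENNReal.exists_nat_gt (ENNReal.div_lt_top hyt hA0).ne
        refine ⟨N, ?_⟩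
        have h2 : ((N:ℝ≥0∞)) ≤ (2:ℝ≥0∞) ^ N := by
          have := (Nat.lt_two_pow_self (n := N)).le
          exact_mod_cast this
        have h3 : G y < (2:ℝ≥0∞) ^ N * A := by
          rw [← ENNReal.div_lt_iff (Or.inl hA0) (Or.inl hAt)]
          exact hN.trans_le h2
        exact h3.le
      set K := Nat.find hex with hKdef
      have hK : G y ≤ (2:ℝ≥0∞) ^ K * A := Nat.find_spec hex
      have hK0 : K ≠ 0 := by
        intro h0
        rw [h0] at hK
        simp only [pow_zero, one_mul] at hK
        exact hlt.not_ge hK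
      have hind : ∀ k, k < K → (T k).indicator (1 : En n → ℝ≥0∞) y = 1 := by
        intro k hkK
        have hmem : y ∈ {z | (2:ℝ≥0∞) ^ k * A < G z} := by
          have := Nat.find_min hex hkK
          exact not_le.mp this
        rw [indicator_of_mem (subset_toMeasurable _ _ hmem)]
        rfl
      calc G y ^ δ ≤ ((2:ℝ≥0∞) ^ K * A) ^ δ := ENNReal.rpow_le_rpow hK hδ.le
        _ = A ^ δ + ∑ k ∈ Finset.range K, ((2:ℝ≥0∞) ^ k * A) ^ δ * c₁ := (telescope K).symm
        _ ≤ A ^ δ + ∑' k : ℕ, ((2:ℝ≥0∞) ^ k * A) ^ δ * c₁ * (T k).indicator 1 y := by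
            refine add_le_add_right ?_ _
            refine le_trans (le_of_eq (Finset.sum_congr rfl fun k hk => ?_))
              (ENNReal.sum_le_tsum _)
            rw [hind k (Finset.mem_range.mp hk), mul_one]
  -- integrate
  set g : ℕ → En n → ℝ≥0∞ :=
    fun k y => ((2:ℝ≥0∞) ^ k * A) ^ δ * c₁ * (T k).indicator 1 y with hg
  have hgmeas : ∀ k, Measurable (g k) := by
    intro k
    exact (measurable_one.indicator (measurableSet_toMeasurable _ _)).const_mul _
  have hae : ∀ᵐ y ∂(volume.restrict Q), G y ^ δ ≤ A ^ δ + ∑' k, g k y := by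
    refine ae_restrict_of_ae ?_
    have hsub : {y : En n | ¬ (G y ^ δ ≤ A ^ δ + ∑' k, g k y)} ⊆ {y | G y = ⊤} := by
      intro y hy
      by_contra hyt
      exact hy (hpoint y hyt)
    exact (ae_iff).mpr (measure_mono_null hsub hnull)
  set r : ℝ≥0∞ := (2:ℝ≥0∞) ^ (δ - (m:ℝ)⁻¹) with hr
  have hrfactor : ∀ k : ℕ, ((2:ℝ≥0∞) ^ δ) ^ k * (((2:ℝ≥0∞) ^ ((m:ℝ)⁻¹))⁻¹) ^ k = r ^ k := by
    intro k
    rw [← mul_pow]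
    congr 1
    rw [hr, sub_eq_add_neg, ENNReal.rpow_add _ _ (by norm_num) (by norm_num),
      ENNReal.rpow_neg]
  calc ∫⁻ y in Q, G y ^ δ ≤ ∫⁻ y in Q, (A ^ δ + ∑' k, g k y) := lintegral_mono_ae hae
    _ = A ^ δ * volume Q + ∫⁻ y in Q, ∑' k, g k y := by
        rw [lintegral_add_left measurable_const, setLIntegral_const]
    _ = A ^ δ * volume Q + ∑' k, ∫⁻ y in Q, g k y := by
        rw [lintegral_tsum fun k => (hgmeas k).aemeasurable]
    _ ≤ A ^ δ * volume Q + ∑' k : ℕ,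
        (A ^ δ * c₁ * (5 ^ n * (P / A) ^ ((m:ℝ)⁻¹))) * r ^ k := by
        refine add_le_add_right (ENNReal.tsum_le_tsum fun k => ?_) _
        have h5 : ∫⁻ y in Q, g k y = ((2:ℝ≥0∞) ^ k * A) ^ δ * c₁ * volume (T k ∩ Q) := by
          rw [hg]
          simp only []
          rw [lintegral_const_mul _ (measurable_one.indicator (measurableSet_toMeasurable _ _)),
            lintegral_indicator_one (measurableSet_toMeasurable _ _),
            Measure.restrict_apply (measurableSet_toMeasurable _ _)]
        rw [h5]
        calc ((2:ℝ≥0∞) ^ k * A) ^ δ * c₁ * volume (T k ∩ Q)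
            ≤ ((2:ℝ≥0∞) ^ k * A) ^ δ * c₁ *
              (5 ^ n * ((P / A) ^ ((m:ℝ)⁻¹) * (((2:ℝ≥0∞) ^ ((m:ℝ)⁻¹))⁻¹) ^ k)) := by
              gcongr
              exact (measure_mono inter_subset_left).trans (hTvol k)
          _ = (A ^ δ * c₁ * (5 ^ n * (P / A) ^ ((m:ℝ)⁻¹))) * r ^ k := by
              rw [ENNReal.mul_rpow_of_nonneg _ _ hδ.le, pow_rpow_comm, ← hrfactor k]
              ring
    _ = A ^ δ * volume Q + (A ^ δ * c₁ * (5 ^ n * (P / A) ^ ((m:ℝ)⁻¹))) * (1 - r)⁻¹ := by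
        rw [ENNReal.tsum_mul_left, ENNReal.tsum_geometric]
    _ ≤ A ^ δ * volume Q + A ^ δ * (5 ^ n * volume Q) * ENNReal.ofReal (8 / (1 - m * δ)) := by
        refine add_le_add_right ?_ _
        have hc1r : c₁ * (1 - r)⁻¹ ≤ ENNReal.ofReal (8 / (1 - m * δ)) := by
          calc c₁ * (1 - r)⁻¹ ≤ ENNReal.ofReal (2 / m) * ENNReal.ofReal (4 * m / (1 - m * δ)) :=
                mul_le_mul' (c1_le hm hδm.le) (geom_le hm hδ.le hδm)
            _ = ENNReal.ofReal (2 / m * (4 * m / (1 - m * δ))) := by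
                rw [← ENNReal.ofReal_mul (by positivity)]
            _ = ENNReal.ofReal (8 / (1 - m * δ)) := by
                congr 1
                have hm0 : (m:ℝ) ≠ 0 := by
                  have : (0:ℝ) < m := by exact_mod_cast hm
                  exact this.ne'
                rw [div_mul_div_comm, show (2:ℝ) * (4 * m) = (m:ℝ) * 8 by ring,
                  mul_div_mul_left _ _ hm0]
        calc A ^ δ * c₁ * (5 ^ n * (P / A) ^ ((m:ℝ)⁻¹)) * (1 - r)⁻¹
            ≤ A ^ δ * c₁ * (5 ^ n * volume Q) * (1 - r)⁻¹ := by gcongr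
          _ = A ^ δ * (5 ^ n * volume Q) * (c₁ * (1 - r)⁻¹) := by ring
          _ ≤ A ^ δ * (5 ^ n * volume Q) * ENNReal.ofReal (8 / (1 - m * δ)) := by gcongr
    _ = A ^ δ * volume Q * (1 + 5 ^ n * ENNReal.ofReal (8 / (1 - m * δ))) := by ring
lemma locMax_eq_zero {S : Set (En n)} (hP : (∏ i, μ i S) = 0) (y : En n) :
    locMax μ S y = 0 := by
  obtain ⟨i₀, -, hi₀⟩ := Finset.prod_eq_zero_iff.mp hP
  refine le_antisymm (iSup₂_le fun R hR => le_of_eq ?_) (zero_le)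
  refine Finset.prod_eq_zero (Finset.mem_univ i₀) ?_
  have : μ i₀ (R ∩ S) = 0 :=
    le_antisymm (le_trans (measure_mono inter_subset_right) hi₀.le) (zero_le)
  rw [this, ENNReal.zero_div]

lemma subset_tripled {a : En n} {h : ℝ} (hh : 0 < h) :
    cubeSet a h ⊆ cubeSet (pt fun i => a i - h) (3 * h) := by
  intro x hx i
  have := hx i
  simp only [pt_apply]
  constructor <;> linarith [this.1, this.2]

lemma volume_tripled {a : En n} {h : ℝ} (hh : 0 < h) :
    volume (cubeSet (pt fun i => a i - h) (3 * h)) = 3 ^ n * volume (cubeSet a h) := by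
  rw [volume_cubeSet _ (by linarith), volume_cubeSet _ hh.le,
    ENNReal.ofReal_mul (by norm_num : (0:ℝ) ≤ 3), mul_pow]
  norm_num

/-- Main per-cube estimate, `n ≥ 1`. -/
lemma main_estimate (hn : 0 < n) (hm : 0 < m) {δ : ℝ} (hδ : 0 < δ) (hδm : δ < 1 / (m:ℝ))
    (a : En n) {h : ℝ} (hh : 0 < h) {x₀ : En n} (hx₀ : x₀ ∈ cubeSet a h) :
    ∫⁻ y in cubeSet a h, multiMaxMeas μ y ^ δ ≤
      ENNReal.ofReal (10 * 15 ^ n / (1 - m * δ)) * (multiMaxMeas μ x₀ ^ δ)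
        * volume (cubeSet a h) := by
  have hmR : (0:ℝ) < m := by exact_mod_cast hm
  have hmδ1 : (m:ℝ) * δ < 1 := by
    have := mul_lt_mul_of_pos_left hδm hmR
    rwa [mul_one_div, div_self hmR.ne'] at this
  have hδ1 : δ ≤ 1 := by
    have h1 : 1 / (m:ℝ) ≤ 1 := by
      rw [div_le_one hmR]
      exact_mod_cast hm
    linarith
  set Q := cubeSet a h with hQdef
  set S := cubeSet (pt fun i => a i - h) (3 * h) with hSdef
  set M₀ := multiMaxMeas μ x₀ with hM₀def
  set E : ℝ≥0∞ := (3:ℝ≥0∞) ^ (n * m) * M₀ with hEdef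
  have hpoint : ∀ y ∈ Q, multiMaxMeas μ y ^ δ ≤ E ^ δ + locMax μ S y ^ δ := by
    intro y hy
    calc multiMaxMeas μ y ^ δ ≤ (E + locMax μ S y) ^ δ :=
          ENNReal.rpow_le_rpow (pointwise_split μ hh hx₀ hy) hδ.le
      _ ≤ E ^ δ + locMax μ S y ^ δ := ENNReal.rpow_add_le_add_rpow _ _ hδ.le hδ1
  have hsplit : ∫⁻ y in Q, multiMaxMeas μ y ^ δ ≤ E ^ δ * volume Q +
      ∫⁻ y in Q, locMax μ S y ^ δ := by
    calc ∫⁻ y in Q, multiMaxMeas μ y ^ δ ≤ ∫⁻ y in Q, (E ^ δ + locMax μ S y ^ δ) :=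
          setLIntegral_mono' (measurableSet_cubeSet a h) hpoint
      _ = E ^ δ * volume Q + ∫⁻ y in Q, locMax μ S y ^ δ := by
          rw [lintegral_add_left measurable_const, setLIntegral_const]
  rcases eq_or_ne M₀ ⊤ with hMt | hMt
  · -- right side is infinite
    have h1 : multiMaxMeas μ x₀ ^ δ = ⊤ := by
      rw [← hM₀def, hMt, ENNReal.top_rpow_of_pos hδ]
    have h2 : ENNReal.ofReal (10 * 15 ^ n / (1 - m * δ)) ≠ 0 := by
      refine (ENNReal.ofReal_pos.mpr ?_).ne'
      have h15 : (0:ℝ) < 15 ^ n := by positivity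
      have : (0:ℝ) < 1 - m * δ := by linarith
      positivity
    rw [h1, ENNReal.mul_top h2, ENNReal.top_mul (volume_cubeSet_pos hh).ne']
    exact le_top
  rcases eq_or_ne M₀ 0 with hM0 | hM0
  · -- everything vanishes
    have hP0 : (∏ i, μ i S) = 0 := by
      have h1 : (∏ i, μ i S) / volume S ^ m ≤ M₀ := by
        rw [← prod_div_const]
        exact le_multiMaxMeas μ (isCube_cubeSet _ (by linarith)) (subset_tripled hh hx₀)
      rw [hM0, le_zero_iff, ENNReal.div_eq_zero_iff] at h1
      rcases h1 with h1 | h1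
      · exact h1
      · exact absurd h1 (pow_ne_top (volume_cubeSet_lt_top _ _).ne)
    have hzero : ∀ y ∈ Q, multiMaxMeas μ y ^ δ ≤ 0 := by
      intro y hy
      refine le_trans (hpoint y hy) (le_of_eq ?_)
      rw [locMax_eq_zero μ hP0, hEdef, hM0, mul_zero, ENNReal.zero_rpow_of_pos hδ]
      simp
    calc ∫⁻ y in Q, multiMaxMeas μ y ^ δ ≤ ∫⁻ _ in Q, (0:ℝ≥0∞) :=
          setLIntegral_mono' (measurableSet_cubeSet a h) hzero
      _ = 0 := lintegral_zero
      _ ≤ _ := zero_le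
  -- main case
  have hE0 : E ≠ 0 := mul_ne_zero (pow_ne_zero _ (by norm_num)) hM0
  have hEt : E ≠ ⊤ := ENNReal.mul_ne_top (pow_ne_top (by norm_num)) hMt
  have hPA : (∏ i, μ i S) ≤ E * volume Q ^ m := by
    have h1 : (∏ i, μ i S) / volume S ^ m ≤ M₀ := by
      rw [← prod_div_const]
      exact le_multiMaxMeas μ (isCube_cubeSet _ (by linarith)) (subset_tripled hh hx₀)
    have h2 : (∏ i, μ i S) ≤ M₀ * volume S ^ m := by
      rw [← ENNReal.div_le_iff_le_mul (Or.inl (pow_ne_zero _ (volume_cubeSet_pos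
        (by linarith : (0:ℝ) < 3 * h)).ne')) (Or.inl (pow_ne_top
        (volume_cubeSet_lt_top _ _).ne))]
      exact h1
    refine h2.trans (le_of_eq ?_)
    rw [hSdef, volume_tripled hh, mul_pow, ← pow_mul, hEdef]
    ring
  have hkol := kolmogorov μ hn hm hδ hδm (measurableSet_cubeSet _ _) a h hE0 hEt hPA
  have hEδ : E ^ δ ≤ 3 ^ n * M₀ ^ δ := by
    rw [hEdef, ENNReal.mul_rpow_of_nonneg _ _ hδ.le]
    gcongr
    calc ((3:ℝ≥0∞) ^ (n * m)) ^ δ = (3:ℝ≥0∞) ^ (((n * m : ℕ):ℝ) * δ) := by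
          rw [← ENNReal.rpow_natCast 3 (n * m), ← ENNReal.rpow_mul]
      _ ≤ (3:ℝ≥0∞) ^ ((n:ℝ)) := by
          refine ENNReal.rpow_le_rpow_of_exponent_le (by norm_num) ?_
          push_cast
          nlinarith [Nat.cast_nonneg (α := ℝ) n]
      _ = (3:ℝ≥0∞) ^ n := ENNReal.rpow_natCast 3 n
  have hconst : (3:ℝ≥0∞) ^ n * (2 + 5 ^ n * ENNReal.ofReal (8 / (1 - m * δ))) ≤
      ENNReal.ofReal (10 * 15 ^ n / (1 - m * δ)) := by
    have hd : (0:ℝ) < 1 - m * δ := by linarith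
    have h3 : (3:ℝ≥0∞) ^ n = ENNReal.ofReal ((3:ℝ) ^ n) := by
      rw [show ((3:ℝ≥0∞)) = ENNReal.ofReal (3:ℝ) by norm_num, ← ENNReal.ofReal_pow (by norm_num)]
    have h5 : (5:ℝ≥0∞) ^ n = ENNReal.ofReal ((5:ℝ) ^ n) := by
      rw [show ((5:ℝ≥0∞)) = ENNReal.ofReal (5:ℝ) by norm_num, ← ENNReal.ofReal_pow (by norm_num)]
    have h2 : (2:ℝ≥0∞) ≤ ENNReal.ofReal (2 / (1 - m * δ)) := by
      rw [show ((2:ℝ≥0∞)) = ENNReal.ofReal (2:ℝ) by norm_num]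
      refine ENNReal.ofReal_le_ofReal ?_
      rw [le_div_iff₀ hd]
      nlinarith
    calc (3:ℝ≥0∞) ^ n * (2 + 5 ^ n * ENNReal.ofReal (8 / (1 - m * δ)))
        ≤ ENNReal.ofReal ((3:ℝ) ^ n) * (ENNReal.ofReal (2 / (1 - m * δ)) +
            ENNReal.ofReal ((5:ℝ) ^ n) * ENNReal.ofReal (8 / (1 - m * δ))) := by
          rw [h3, h5]
          gcongr
      _ = ENNReal.ofReal ((3:ℝ) ^ n * (2 / (1 - m * δ) + 5 ^ n * (8 / (1 - m * δ)))) := by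
          rw [← ENNReal.ofReal_mul (by positivity), ← ENNReal.ofReal_add (by positivity)
            (by positivity), ← ENNReal.ofReal_mul (by positivity)]
      _ ≤ ENNReal.ofReal (10 * 15 ^ n / (1 - m * δ)) := by
          refine ENNReal.ofReal_le_ofReal ?_
          have h35 : (3:ℝ) ^ n * 5 ^ n = 15 ^ n := by
            rw [← mul_pow]; norm_num
          have h3le : (3:ℝ) ^ n ≤ 15 ^ n := pow_le_pow_left₀ (by norm_num) (by norm_num) n
          have key : (3:ℝ) ^ n * (2 / (1 - m * δ) + 5 ^ n * (8 / (1 - m * δ))) =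
              (2 * 3 ^ n + 8 * ((3:ℝ) ^ n * 5 ^ n)) / (1 - m * δ) := by
            field_simp
          rw [key, h35]
          have h15 : (0:ℝ) ≤ 15 ^ n := by positivity
          gcongr
          linarith
  calc ∫⁻ y in Q, multiMaxMeas μ y ^ δ
      ≤ E ^ δ * volume Q + E ^ δ * volume Q * (1 + 5 ^ n * ENNReal.ofReal (8 / (1 - m * δ))) :=
        hsplit.trans (add_le_add_right hkol _)
    _ = E ^ δ * volume Q * (2 + 5 ^ n * ENNReal.ofReal (8 / (1 - m * δ))) := by ring
    _ ≤ (3 ^ n * M₀ ^ δ) * volume Q * (2 + 5 ^ n * ENNReal.ofReal (8 / (1 - m * δ))) := by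
        gcongr
    _ = M₀ ^ δ * volume Q * ((3:ℝ≥0∞) ^ n * (2 + 5 ^ n * ENNReal.ofReal (8 / (1 - m * δ)))) := by
        ring
    _ ≤ M₀ ^ δ * volume Q * ENNReal.ofReal (10 * 15 ^ n / (1 - m * δ)) := by gcongr
    _ = ENNReal.ofReal (10 * 15 ^ n / (1 - m * δ)) * M₀ ^ δ * volume Q := by ring
lemma cube_eq_univ_dim0 (Q : Set (En 0)) (hQ : IsCube Q) : Q = univ := by
  obtain ⟨a, h, hh, rfl⟩ := hQ
  exact eq_univ_of_forall fun x i => i.elim0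

lemma isCube_univ_dim0 : IsCube (univ : Set (En 0)) :=
  ⟨pt fun _ => 0, 1, one_pos, (eq_univ_of_forall fun x i => i.elim0).symm⟩

lemma volume_univ_dim0 : volume (univ : Set (En 0)) = 1 := by
  have h1 : (univ : Set (En 0)) = cubeSet (pt fun _ => 0) 1 :=
    (eq_univ_of_forall fun x i => i.elim0).symm
  rw [h1, volume_cubeSet _ (by norm_num)]
  norm_num

lemma multiMaxMeas_const_dim0 {m : ℕ} (μ : Fin m → Measure (En 0)) (y : En 0) :
    multiMaxMeas μ y = ∏ i, μ i univ / volume (univ : Set (En 0)) := by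
  apply le_antisymm
  · refine iSup₂_le ?_
    rintro R ⟨hR, -⟩
    rw [cube_eq_univ_dim0 R hR]
  · exact le_multiMaxMeas μ isCube_univ_dim0 (mem_univ y)

end CR

open CR

/-- Coifman–Rochberg theorem for the multilinear maximal function:
if `𝓜(μ⃗) < ∞` a.e. then `(𝓜(μ⃗))^δ ∈ A₁` with `[(𝓜(μ⃗))^δ]_{A₁} ≤ c_n/(1 − mδ)` for
`0 < δ < 1/m`. -/
theorem multilinear_coifman_rochberg (n : ℕ) :
    ∃ c > (0:ℝ), ∀ (m : ℕ), 0 < m → ∀ μ : Fin m → Measure (En n),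
      (∀ᵐ x ∂(volume : Measure (En n)), multiMaxMeas μ x < ⊤) →
      ∀ δ : ℝ, 0 < δ → δ < 1 / m →
        A1Const n (fun x => multiMaxMeas μ x ^ δ) < ⊤ ∧
        A1Const n (fun x => multiMaxMeas μ x ^ δ) ≤ ENNReal.ofReal (c / (1 - m * δ)) := by
  refine ⟨10 * 15 ^ n, by positivity, ?_⟩
  intro m hm μ _ δ hδ hδm
  have hmR : (0:ℝ) < m := by exact_mod_cast hm
  have hmδ1 : (m:ℝ) * δ < 1 := by
    have := mul_lt_mul_of_pos_left hδm hmR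
    rwa [mul_one_div, div_self hmR.ne'] at this
  have hd : (0:ℝ) < 1 - m * δ := by linarith
  set C := ENNReal.ofReal (10 * 15 ^ n / (1 - m * δ)) with hCdef
  have h15 : (1:ℝ) ≤ 10 * 15 ^ n := by
    have : (1:ℝ) ≤ 15 ^ n := one_le_pow₀ (by norm_num : (1:ℝ) ≤ 15)
    linarith
  have hC1 : (1:ℝ≥0∞) ≤ C := by
    rw [hCdef, ← ENNReal.ofReal_one]
    refine ENNReal.ofReal_le_ofReal ?_
    rw [le_div_iff₀ hd]
    have hmδ0 : (0:ℝ) ≤ (m:ℝ) * δ := by positivity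
    linarith
  have hkey : ∀ x₀, maxE (fun x => multiMaxMeas μ x ^ δ) x₀ ≤ C * multiMaxMeas μ x₀ ^ δ := by
    intro x₀
    refine iSup₂_le ?_
    rintro Q ⟨⟨a, h, hh, rfl⟩, hx₀⟩
    show (∫⁻ y in cubeSet a h, multiMaxMeas μ y ^ δ) / volume (cubeSet a h) ≤
      C * multiMaxMeas μ x₀ ^ δ
    rcases Nat.eq_zero_or_pos n with hn0 | hn
    · subst hn0
      have hQu : cubeSet a h = univ := eq_univ_of_forall fun x i => i.elim0
      rw [hQu, volume_univ_dim0]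
      simp_rw [multiMaxMeas_const_dim0 μ]
      rw [setLIntegral_const, volume_univ_dim0, mul_one]
      simpa using le_mul_of_one_le_left (zero_le) hC1
    · rw [ENNReal.div_le_iff_le_mul (Or.inl (volume_cubeSet_pos hh).ne')
        (Or.inl (volume_cubeSet_lt_top a h).ne)]
      exact main_estimate μ hn hm hδ hδm a hh hx₀
  have hmem : ∀ᵐ x ∂(volume : Measure (En n)),
      maxE (fun x => multiMaxMeas μ x ^ δ) x ≤ C * multiMaxMeas μ x ^ δ :=
    Filter.Eventually.of_forall hkey
  have hle : A1Const n (fun x => multiMaxMeas μ x ^ δ) ≤ C := sInf_le hmem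
  exact ⟨lt_of_le_of_lt hle ENNReal.ofReal_lt_top, hle⟩

end
end
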